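/- arXiv:2604.12332 — 8 statements merged into one kernel-verified Lean document; each statement's English description precedes it below -/
import Mathlib

section
/- For every integer n ≥ 5, every simple graph on n vertices that contains no subgraph isomorphic to θ(2,2,2) has at most n(√(8n−7)+1)/4 edges. -/
open SimpleGraph

/-- `H` is contained in `G` as a subgraph: there is an injective map of vertices
carrying edges of `H` to edges of `G`. -/
def Contains {α β : Type*} (H : SimpleGraph α) (G : SimpleGraph β) : Prop :=
  ∃ f : α → β, Function.Injective f ∧ ∀ ⦃a b⦄, H.Adj a b → G.Adj (f a) (f b)

/-- The number of edges of a simple graph. -/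
noncomputable def edgeCount {α : Type*} (G : SimpleGraph α) : ℕ := Nat.card G.edgeSet

/-- The theta graph `θ(2,2,2)`, i.e. the complete bipartite graph `K_{2,3}`. -/
def theta222 : SimpleGraph (Fin 2 ⊕ Fin 3) := completeBipartiteGraph (Fin 2) (Fin 3)

lemma codeg_le_two {n : ℕ} (G : SimpleGraph (Fin n)) [DecidableRel G.Adj]
    (hfree : ¬ Contains theta222 G) {a b : Fin n} (hab : a ≠ b) :
    (G.neighborFinset a ∩ G.neighborFinset b).card ≤ 2 := by
  by_contra h
  push_neg at h
  obtain ⟨t, hts, ht3⟩ := Finset.exists_subset_card_eq (show 3 ≤ _ from h)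
  obtain ⟨c1, c2, c3, h12, h13, h23, rfl⟩ := Finset.card_eq_three.mp ht3
  have hc1 := hts (show c1 ∈ ({c1, c2, c3} : Finset _) by simp)
  have hc2 := hts (show c2 ∈ ({c1, c2, c3} : Finset _) by simp)
  have hc3 := hts (show c3 ∈ ({c1, c2, c3} : Finset _) by simp)
  simp only [Finset.mem_inter, SimpleGraph.mem_neighborFinset] at hc1 hc2 hc3
  obtain ⟨ha1, hb1⟩ := hc1
  obtain ⟨ha2, hb2⟩ := hc2
  obtain ⟨ha3, hb3⟩ := hc3
  apply hfree
  refine ⟨Sum.elim ![a, b] ![c1, c2, c3], ?_, ?_⟩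
  · rintro (i | i) (j | j) hxy <;>
      simp only [Sum.elim_inl, Sum.elim_inr] at hxy
    · congr 1
      fin_cases i <;> fin_cases j <;> simp_all
    · exfalso
      fin_cases i <;> fin_cases j <;> simp_all
    · exfalso
      fin_cases i <;> fin_cases j <;> simp_all
    · congr 1
      fin_cases i <;> fin_cases j <;> simp_all
  · rintro (i | i) (j | j) hadj <;>
      simp only [theta222, completeBipartiteGraph_adj] at hadj <;>
      simp only [Sum.isLeft_inl, Sum.isRight_inl, Sum.isLeft_inr, Sum.isRight_inr,
        Bool.true_eq_false, false_and, and_false, or_false, false_or, and_self] at hadj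
    all_goals simp only [Sum.elim_inl, Sum.elim_inr]
    · exact absurd hadj (by simp)
    · fin_cases i <;> fin_cases j <;> simp_all
    · fin_cases i <;> fin_cases j <;> simp_all [G.adj_comm]
    · exact absurd hadj (by simp)

lemma double_count {n : ℕ} (G : SimpleGraph (Fin n)) [DecidableRel G.Adj] :
    ∑ v : Fin n, (G.neighborFinset v).offDiag.card
      = ∑ p ∈ (Finset.univ : Finset (Fin n)).offDiag,
          (G.neighborFinset p.1 ∩ G.neighborFinset p.2).card := by
  have lhs : ∀ v : Fin n, (G.neighborFinset v).offDiag.card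
      = ∑ p ∈ (Finset.univ : Finset (Fin n)).offDiag,
          (if G.Adj v p.1 ∧ G.Adj v p.2 then 1 else 0) := by
    intro v
    rw [← Finset.sum_filter, Finset.sum_const, smul_eq_mul, mul_one]
    congr 1
    ext p
    simp [Finset.mem_offDiag]
    tauto
  have rhs : ∀ p : Fin n × Fin n, (G.neighborFinset p.1 ∩ G.neighborFinset p.2).card
      = ∑ v : Fin n, (if G.Adj v p.1 ∧ G.Adj v p.2 then 1 else 0) := by
    intro p
    rw [← Finset.sum_filter, Finset.sum_const, smul_eq_mul, mul_one]
    congr 1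
    ext v
    simp [G.adj_comm]
  simp only [lhs, rhs]
  exact Finset.sum_comm

/-- For every `n ≥ 5`, every `θ(2,2,2)`-free simple graph on `n` vertices has at most
`n(√(8n−7)+1)/4` edges. -/
theorem stmt0 (n : ℕ) (hn : 5 ≤ n) (G : SimpleGraph (Fin n))
    (hfree : ¬ Contains theta222 G) :
    (edgeCount G : ℝ) ≤ n * (Real.sqrt (8 * (n : ℝ) - 7) + 1) / 4 := by
  classical
  -- key counting inequality in ℕ
  have hcount : ∑ v : Fin n, (G.neighborFinset v).offDiag.card ≤ 2 * (n * n - n) := by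
    rw [double_count]
    calc ∑ p ∈ (Finset.univ : Finset (Fin n)).offDiag,
          (G.neighborFinset p.1 ∩ G.neighborFinset p.2).card
        ≤ ∑ _p ∈ (Finset.univ : Finset (Fin n)).offDiag, 2 := by
          apply Finset.sum_le_sum
          intro p hp
          exact codeg_le_two G hfree (Finset.mem_offDiag.mp hp).2.2
      _ = 2 * (n * n - n) := by
          rw [Finset.sum_const, smul_eq_mul, Finset.offDiag_card]
          simp [mul_comm]
  -- rewrite offDiag cards via degrees
  have hdeg : ∀ v : Fin n, (G.neighborFinset v).offDiag.card
      = G.degree v * G.degree v - G.degree v := by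
    intro v
    rw [Finset.offDiag_card, SimpleGraph.card_neighborFinset_eq_degree]
  -- move to ℝ
  set m : ℕ := edgeCount G with hm
  have hsumdeg : ∑ v : Fin n, G.degree v = 2 * m := by
    rw [SimpleGraph.sum_degrees_eq_twice_card_edges]
    congr 1
    simp [hm, edgeCount, Nat.card_eq_fintype_card, Set.toFinset_card, edgeFinset]
  have hdd : ∀ d : ℕ, d ≤ d * d := by
    intro d
    cases d with
    | zero => simp
    | succ k => exact Nat.le_mul_of_pos_left _ (Nat.succ_pos k)
  have hsq : ∑ v : Fin n, G.degree v * G.degree v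
      ≤ 2 * m + 2 * (n * n - n) := by
    have h1 : ∑ v : Fin n, (G.degree v * G.degree v - G.degree v)
        ≤ 2 * (n * n - n) := by
      calc ∑ v : Fin n, (G.degree v * G.degree v - G.degree v)
          = ∑ v : Fin n, (G.neighborFinset v).offDiag.card := by
            exact Finset.sum_congr rfl fun v _ => (hdeg v).symm
        _ ≤ 2 * (n * n - n) := hcount
    have h2 : ∑ v : Fin n, (G.degree v * G.degree v - G.degree v)
        = ∑ v : Fin n, G.degree v * G.degree v - ∑ v : Fin n, G.degree v := by
      rw [Finset.sum_tsub_distrib]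
      intro v _
      exact hdd _
    omega
  -- Cauchy–Schwarz
  have hCS : ((∑ v : Fin n, G.degree v : ℕ) : ℝ) ^ 2
      ≤ (n : ℝ) * ∑ v : Fin n, ((G.degree v : ℝ)) ^ 2 := by
    have := sq_sum_le_card_mul_sum_sq (s := (Finset.univ : Finset (Fin n)))
      (f := fun v => (G.degree v : ℝ))
    simpa using this
  have hsqR : ∑ v : Fin n, ((G.degree v : ℝ)) ^ 2
      ≤ 2 * (m : ℝ) + 2 * ((n : ℝ) * n - n) := by
    have hnn : (n : ℝ) ≤ (n : ℝ) * n := by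
      nlinarith [show (1:ℝ) ≤ (n:ℝ) by exact_mod_cast (show 1 ≤ n by omega)]
    calc ∑ v : Fin n, ((G.degree v : ℝ)) ^ 2
        = ((∑ v : Fin n, G.degree v * G.degree v : ℕ) : ℝ) := by
          push_cast
          exact Finset.sum_congr rfl fun v _ => by ring
      _ ≤ ((2 * m + 2 * (n * n - n) : ℕ) : ℝ) := Nat.cast_le.mpr hsq
      _ = 2 * (m : ℝ) + 2 * ((n : ℝ) * n - n) := by
          have : n ≤ n * n := hdd n
          push_cast [Nat.cast_sub this]
          ring
  -- combine: (2m)^2 ≤ n * (2m + 2(n² - n))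
  have key : (2 * (m : ℝ)) ^ 2 ≤ (n : ℝ) * (2 * m + 2 * ((n : ℝ) * n - n)) := by
    have h1 : ((∑ v : Fin n, G.degree v : ℕ) : ℝ) = 2 * (m : ℝ) := by
      rw [hsumdeg]; push_cast; ring
    calc (2 * (m : ℝ)) ^ 2 = ((∑ v : Fin n, G.degree v : ℕ) : ℝ) ^ 2 := by rw [h1]
      _ ≤ (n : ℝ) * ∑ v : Fin n, ((G.degree v : ℝ)) ^ 2 := hCS
      _ ≤ (n : ℝ) * (2 * m + 2 * ((n : ℝ) * n - n)) := by
          apply mul_le_mul_of_nonneg_left hsqR (by positivity)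
  -- final arithmetic
  set N : ℝ := (n : ℝ) with hN
  have hN5 : (5 : ℝ) ≤ N := by rw [hN]; exact_mod_cast hn
  have hmnn : 0 ≤ (m : ℝ) := Nat.cast_nonneg m
  have hs : Real.sqrt (8 * N - 7) ^ 2 = 8 * N - 7 :=
    Real.sq_sqrt (by linarith)
  have hsnn : 0 ≤ Real.sqrt (8 * N - 7) := Real.sqrt_nonneg _
  -- key : 4m² ≤ N(2m + 2(N² - N)), want m ≤ N(√(8N-7)+1)/4
  rcases le_or_gt (4 * (m : ℝ)) N with h | h
  · nlinarith
  · have h4 : 0 ≤ 4 * (m : ℝ) - N := by linarith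
    have hNSnn : 0 ≤ N * Real.sqrt (8 * N - 7) := mul_nonneg (by linarith) hsnn
    have : 4 * (m : ℝ) - N ≤ N * Real.sqrt (8 * N - 7) := by
      by_contra hcon
      push_neg at hcon
      have h5 : (N * Real.sqrt (8 * N - 7)) ^ 2 < (4 * (m : ℝ) - N) ^ 2 :=
        pow_lt_pow_left₀ hcon hNSnn (by norm_num)
      have h6 : (N * Real.sqrt (8 * N - 7)) ^ 2 = N ^ 2 * (8 * N - 7) := by
        rw [mul_pow, hs]
      nlinarith [key]
    linarith
end

section
/- Let n ≥ 5 and let G be a θ(2,2,2)-free simple graph on n vertices having the maximum possible number of edges among all θ(2,2,2)-free graphs on n vertices. Then any two distinct vertices of G are joined by a path of length at most 3 (in particular G is connected with diameter at most 3). -/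
open SimpleGraph

/-- If `n ≥ 5` and `G` is a `θ(2,2,2)`-free graph on `n` vertices with the maximum number
of edges among all such graphs, then any two distinct vertices of `G` are joined by a path
of length at most `3`. -/
theorem stmt1 (n : ℕ) (hn : 5 ≤ n) (G : SimpleGraph (Fin n))
    (hfree : ¬ Contains theta222 G)
    (hmax : ∀ G' : SimpleGraph (Fin n), ¬ Contains theta222 G' → edgeCount G' ≤ edgeCount G) :
    ∀ u v : Fin n, u ≠ v → ∃ p : G.Walk u v, p.IsPath ∧ p.length ≤ 3 := by
  intro u v huv
  by_contra hcon
  -- From the negation, no walk of length ≤ 3 from u to v exists.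
  have hwalk : ∀ w : G.Walk u v, ¬ w.length ≤ 3 := by
    intro w hw
    exact hcon ⟨w.bypass, w.bypass_isPath, le_trans w.length_bypass_le hw⟩
  have hadj : ¬ G.Adj u v := by
    intro h
    exact hwalk (Walk.cons h Walk.nil) (by simp)
  -- Add the edge u v.
  set G' : SimpleGraph (Fin n) := G ⊔ fromEdgeSet {s(u, v)} with hG'def
  have hG'adj : ∀ a b : Fin n, G'.Adj a b ↔ G.Adj a b ∨ (s(a, b) = s(u, v) ∧ a ≠ b) := by
    intro a b
    simp [hG'def, fromEdgeSet_adj]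
  -- G' is still theta222-free.
  have hfree' : ¬ Contains theta222 G' := by
    rintro ⟨f, hinj, hf⟩
    -- Either all theta edges map to edges of G, or some edge maps onto {u,v}.
    by_cases hall : ∀ ⦃a b⦄, theta222.Adj a b → G.Adj (f a) (f b)
    · exact hfree ⟨f, hinj, hall⟩
    push_neg at hall
    obtain ⟨a, b, hab, hnadj⟩ := hall
    have h' : s(f a, f b) = s(u, v) := by
      have := hf hab
      rw [hG'adj] at this
      tauto
    -- Normalize so the "left" vertex is first: obtain i, j with s(f(inl i), f(inr j)) = s(u,v)
    obtain ⟨i, j, hij⟩ : ∃ (i : Fin 2) (j : Fin 3), s(f (Sum.inl i), f (Sum.inr j)) = s(u, v) := by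
      rcases a with i | j <;> rcases b with i' | j'
      · simp [theta222] at hab
      · exact ⟨i, j', h'⟩
      · exact ⟨i', j, by rwa [Sym2.eq_swap] at h'⟩
      · simp [theta222] at hab
    -- Other representatives on each side.
    have hinj' : ∀ (x y : Fin 2 ⊕ Fin 3), f x = f y → x = y := fun x y h => hinj h
    have hne2 : (i + 1 : Fin 2) ≠ i := by omega
    have hne3 : (j + 1 : Fin 3) ≠ j := by omega
    -- Each of the three path edges is an edge of G.
    have hedge : ∀ (i' : Fin 2) (j' : Fin 3), (i' ≠ i ∨ j' ≠ j) →
        G.Adj (f (Sum.inl i')) (f (Sum.inr j')) := by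
      intro i' j' hne
      have hadj' : G'.Adj (f (Sum.inl i')) (f (Sum.inr j')) := hf (by simp [theta222])
      rw [hG'adj] at hadj'
      rcases hadj' with h | ⟨heq, _⟩
      · exact h
      · exfalso
        rw [← hij, Sym2.eq_iff] at heq
        rcases heq with ⟨h1, h2⟩ | ⟨h1, h2⟩
        · rcases hne with hne | hne
          · exact hne (Sum.inl.inj (hinj' _ _ h1))
          · exact hne (Sum.inr.inj (hinj' _ _ h2))
        · simpa using hinj' _ _ h1
    -- Build a walk of length 3 from f(inl i) to f(inr j) in G.
    have e1 : G.Adj (f (Sum.inl i)) (f (Sum.inr (j + 1))) := hedge i (j + 1) (Or.inr hne3)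
    have e2 : G.Adj (f (Sum.inr (j + 1))) (f (Sum.inl (i + 1))) :=
      (hedge (i + 1) (j + 1) (Or.inl hne2)).symm
    have e3 : G.Adj (f (Sum.inl (i + 1))) (f (Sum.inr j)) := hedge (i + 1) j (Or.inl hne2)
    have hW : ∃ w : G.Walk (f (Sum.inl i)) (f (Sum.inr j)), w.length ≤ 3 :=
      ⟨Walk.cons e1 (Walk.cons e2 (Walk.cons e3 Walk.nil)), by simp⟩
    rw [Sym2.eq_iff] at hij
    rcases hij with ⟨h1, h2⟩ | ⟨h1, h2⟩
    · subst h1; subst h2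
      obtain ⟨w, hw⟩ := hW
      exact hwalk w hw
    · subst h1; subst h2
      obtain ⟨w, hw⟩ := hW
      exact hwalk w.reverse (by simpa using hw)
  -- But G' has strictly more edges, contradicting maximality.
  have hlt : G < G' := by
    constructor
    · exact le_sup_left
    · intro hle
      exact hadj (hle u v ((hG'adj u v).2 (Or.inr ⟨rfl, huv⟩)))
  have hss : G.edgeSet ⊂ G'.edgeSet := edgeSet_ssubset_edgeSet.2 hlt
  have : edgeCount G < edgeCount G' := by
    simp only [edgeCount, Nat.card_coe_set_eq]
    exact Set.ncard_lt_ncard hss (Set.toFinite _)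
  exact absurd (hmax G' hfree') (not_le.2 this)
end

section
/- For every integer n ≥ 5, every simple graph on n vertices that contains no subgraph isomorphic to any of C₃ (the triangle), θ(2,2,2), θ(1,3,3), or D(4,4;0) has at most n(√(24n−23)−1)/8 edges. -/
open SimpleGraph

/-- The triangle `C₃`. -/
def triangleGraph : SimpleGraph (Fin 3) := ⊤

/-- The theta graph `θ(1,3,3)`: a 6-cycle `0-1-2-3-4-5-0` together with the chord `{0,3}`
joining two opposite vertices. -/
def theta133 : SimpleGraph (Fin 6) :=
  SimpleGraph.fromEdgeSet {s(0, 1), s(1, 2), s(2, 3), s(3, 4), s(4, 5), s(5, 0), s(0, 3)}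

/-- The dumbbell graph `D(4,4;0)`: two 4-cycles sharing exactly one common vertex. -/
def dumbbell440 : SimpleGraph (Fin 7) :=
  SimpleGraph.fromEdgeSet {s(0, 1), s(1, 2), s(2, 3), s(3, 0), s(0, 4), s(4, 5), s(5, 6), s(6, 0)}

section Helpers

open Finset

variable {n : ℕ} (G : SimpleGraph (Fin n))

/-- Build a triangle containment from three mutually adjacent vertices. -/
lemma contains_triangle {a b c : Fin n} (hab : G.Adj a b) (hac : G.Adj a c) (hbc : G.Adj b c) :
    Contains triangleGraph G := by
  refine ⟨![a, b, c], ?_, ?_⟩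
  · intro i j hij
    have ha := hab.ne
    have hb := hac.ne
    have hc := hbc.ne
    fin_cases i <;> fin_cases j <;> simp_all [Matrix.cons_val_zero, Matrix.cons_val_one]
  · intro i j hij
    have h : i ≠ j := hij.ne
    fin_cases i <;> fin_cases j <;> simp_all [triangleGraph] <;>
      first
      | exact hab
      | exact hac
      | exact hbc
      | exact hab.symm
      | exact hac.symm
      | exact hbc.symm

/-- Build a `K_{2,3}` containment. -/
lemma contains_theta222 {a b w₁ w₂ w₃ : Fin n} (hab : a ≠ b)
    (h12 : w₁ ≠ w₂) (h13 : w₁ ≠ w₃) (h23 : w₂ ≠ w₃)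
    (ha1 : G.Adj a w₁) (ha2 : G.Adj a w₂) (ha3 : G.Adj a w₃)
    (hb1 : G.Adj b w₁) (hb2 : G.Adj b w₂) (hb3 : G.Adj b w₃) :
    Contains theta222 G := by
  refine ⟨Sum.elim ![a, b] ![w₁, w₂, w₃], ?_, ?_⟩
  · have key : ∀ i : Fin 2, ∀ j : Fin 3, ![a, b] i ≠ ![w₁, w₂, w₃] j := by
      intro i j
      fin_cases i <;> fin_cases j <;> simp <;>
        first
        | exact ha1.ne
        | exact ha2.ne
        | exact ha3.ne
        | exact hb1.ne
        | exact hb2.ne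
        | exact hb3.ne
    rintro (i | i) (j | j) hij <;> simp only [Sum.elim_inl, Sum.elim_inr] at hij
    · congr 1; fin_cases i <;> fin_cases j <;> simp_all
    · exact absurd hij (key i j)
    · exact absurd hij.symm (key j i)
    · congr 1; fin_cases i <;> fin_cases j <;> simp_all
  · have key : ∀ i : Fin 2, ∀ j : Fin 3, G.Adj (![a, b] i) (![w₁, w₂, w₃] j) := by
      intro i j
      fin_cases i <;> fin_cases j <;>
        first
        | exact ha1
        | exact ha2
        | exact ha3
        | exact hb1
        | exact hb2
        | exact hb3
    rintro (i | i) (j | j) hij <;>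
      simp only [theta222, completeBipartiteGraph_adj, Sum.isLeft_inl, Sum.isRight_inl,
        Sum.isLeft_inr, Sum.isRight_inr, true_and, and_true, false_and, and_false,
        or_false, false_or] at hij
    · exact absurd hij (by simp)
    · exact key i j
    · exact (key j i).symm
    · exact absurd hij (by simp)

/-- Build a `θ(1,3,3)` containment from a 6-cycle `v₀v₁v₂v₃v₄v₅` plus chord `v₀v₃`. -/
lemma contains_theta133 {v : Fin 6 → Fin n} (hinj : Function.Injective v)
    (e01 : G.Adj (v 0) (v 1)) (e12 : G.Adj (v 1) (v 2)) (e23 : G.Adj (v 2) (v 3))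
    (e34 : G.Adj (v 3) (v 4)) (e45 : G.Adj (v 4) (v 5)) (e50 : G.Adj (v 5) (v 0))
    (e03 : G.Adj (v 0) (v 3)) :
    Contains theta133 G := by
  refine ⟨v, hinj, ?_⟩
  intro a b hab
  simp only [theta133, SimpleGraph.fromEdgeSet_adj, Set.mem_insert_iff, Set.mem_singleton_iff,
    Sym2.eq, Sym2.rel_iff', Prod.mk.injEq, Prod.swap_prod_mk] at hab
  obtain ⟨h, -⟩ := hab
  rcases h with (⟨rfl, rfl⟩ | ⟨rfl, rfl⟩) | (⟨rfl, rfl⟩ | ⟨rfl, rfl⟩) | (⟨rfl, rfl⟩ | ⟨rfl, rfl⟩) |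
    (⟨rfl, rfl⟩ | ⟨rfl, rfl⟩) | (⟨rfl, rfl⟩ | ⟨rfl, rfl⟩) | (⟨rfl, rfl⟩ | ⟨rfl, rfl⟩) |
    (⟨rfl, rfl⟩ | ⟨rfl, rfl⟩) <;>
    first
    | exact e01
    | exact e12
    | exact e23
    | exact e34
    | exact e45
    | exact e50
    | exact e03
    | exact e01.symm
    | exact e12.symm
    | exact e23.symm
    | exact e34.symm
    | exact e45.symm
    | exact e50.symm
    | exact e03.symm

/-- Build a dumbbell containment from two 4-cycles `v₀v₁v₂v₃`, `v₀v₄v₅v₆` sharing only `v₀`. -/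
lemma contains_dumbbell {v : Fin 7 → Fin n} (hinj : Function.Injective v)
    (e01 : G.Adj (v 0) (v 1)) (e12 : G.Adj (v 1) (v 2)) (e23 : G.Adj (v 2) (v 3))
    (e30 : G.Adj (v 3) (v 0)) (e04 : G.Adj (v 0) (v 4)) (e45 : G.Adj (v 4) (v 5))
    (e56 : G.Adj (v 5) (v 6)) (e60 : G.Adj (v 6) (v 0)) :
    Contains dumbbell440 G := by
  refine ⟨v, hinj, ?_⟩
  intro a b hab
  simp only [dumbbell440, SimpleGraph.fromEdgeSet_adj, Set.mem_insert_iff, Set.mem_singleton_iff,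
    Sym2.eq, Sym2.rel_iff', Prod.mk.injEq, Prod.swap_prod_mk] at hab
  obtain ⟨h, -⟩ := hab
  rcases h with (⟨rfl, rfl⟩ | ⟨rfl, rfl⟩) | (⟨rfl, rfl⟩ | ⟨rfl, rfl⟩) | (⟨rfl, rfl⟩ | ⟨rfl, rfl⟩) |
    (⟨rfl, rfl⟩ | ⟨rfl, rfl⟩) | (⟨rfl, rfl⟩ | ⟨rfl, rfl⟩) | (⟨rfl, rfl⟩ | ⟨rfl, rfl⟩) |
    (⟨rfl, rfl⟩ | ⟨rfl, rfl⟩) | (⟨rfl, rfl⟩ | ⟨rfl, rfl⟩) <;>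
    first
    | exact e01
    | exact e12
    | exact e23
    | exact e30
    | exact e04
    | exact e45
    | exact e56
    | exact e60
    | exact e01.symm
    | exact e12.symm
    | exact e23.symm
    | exact e30.symm
    | exact e04.symm
    | exact e45.symm
    | exact e56.symm
    | exact e60.symm

end Helpers


section Core

open Finset

variable {n : ℕ} {G : SimpleGraph (Fin n)} [DecidableRel G.Adj]

/-- Injectivity of a 6-tuple from pairwise distinctness. -/
lemma inj6 {α : Type*} {a b c d e f : α}
    (h1 : a ≠ b) (h2 : a ≠ c) (h3 : a ≠ d) (h4 : a ≠ e) (h5 : a ≠ f)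
    (h6 : b ≠ c) (h7 : b ≠ d) (h8 : b ≠ e) (h9 : b ≠ f)
    (h10 : c ≠ d) (h11 : c ≠ e) (h12 : c ≠ f)
    (h13 : d ≠ e) (h14 : d ≠ f) (h15 : e ≠ f) :
    Function.Injective ![a, b, c, d, e, f] := by
  intro ⟨i, hi⟩ ⟨j, hj⟩ hij
  interval_cases i <;> interval_cases j <;>
    first
    | rfl
    | (exfalso; revert hij; simpa using by tauto)

/-- Injectivity of a 7-tuple from pairwise distinctness. -/
lemma inj7 {α : Type*} {a b c d e f g : α}
    (h1 : a ≠ b) (h2 : a ≠ c) (h3 : a ≠ d) (h4 : a ≠ e) (h5 : a ≠ f) (h5' : a ≠ g)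
    (h6 : b ≠ c) (h7 : b ≠ d) (h8 : b ≠ e) (h9 : b ≠ f) (h9' : b ≠ g)
    (h10 : c ≠ d) (h11 : c ≠ e) (h12 : c ≠ f) (h12' : c ≠ g)
    (h13 : d ≠ e) (h14 : d ≠ f) (h14' : d ≠ g)
    (h15 : e ≠ f) (h15' : e ≠ g) (h16 : f ≠ g) :
    Function.Injective ![a, b, c, d, e, f, g] := by
  intro ⟨i, hi⟩ ⟨j, hj⟩ hij
  interval_cases i <;> interval_cases j <;>
    first
    | rfl
    | (exfalso; revert hij; simpa using by tauto)


/-- `θ(1,3,3)` containment with explicit vertices. -/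
lemma contains_theta133' (v₀ v₁ v₂ v₃ v₄ v₅ : Fin n)
    (h1 : v₀ ≠ v₁) (h2 : v₀ ≠ v₂) (h3 : v₀ ≠ v₃) (h4 : v₀ ≠ v₄) (h5 : v₀ ≠ v₅)
    (h6 : v₁ ≠ v₂) (h7 : v₁ ≠ v₃) (h8 : v₁ ≠ v₄) (h9 : v₁ ≠ v₅)
    (h10 : v₂ ≠ v₃) (h11 : v₂ ≠ v₄) (h12 : v₂ ≠ v₅)
    (h13 : v₃ ≠ v₄) (h14 : v₃ ≠ v₅) (h15 : v₄ ≠ v₅)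
    (e01 : G.Adj v₀ v₁) (e12 : G.Adj v₁ v₂) (e23 : G.Adj v₂ v₃)
    (e34 : G.Adj v₃ v₄) (e45 : G.Adj v₄ v₅) (e50 : G.Adj v₅ v₀)
    (e03 : G.Adj v₀ v₃) :
    Contains theta133 G :=
  contains_theta133 G (v := ![v₀, v₁, v₂, v₃, v₄, v₅])
    (inj6 h1 h2 h3 h4 h5 h6 h7 h8 h9 h10 h11 h12 h13 h14 h15)
    e01 e12 e23 e34 e45 e50 e03

/-- Dumbbell containment with explicit vertices. -/
lemma contains_dumbbell' (v₀ v₁ v₂ v₃ v₄ v₅ v₆ : Fin n)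
    (h1 : v₀ ≠ v₁) (h2 : v₀ ≠ v₂) (h3 : v₀ ≠ v₃) (h4 : v₀ ≠ v₄) (h5 : v₀ ≠ v₅) (h5' : v₀ ≠ v₆)
    (h6 : v₁ ≠ v₂) (h7 : v₁ ≠ v₃) (h8 : v₁ ≠ v₄) (h9 : v₁ ≠ v₅) (h9' : v₁ ≠ v₆)
    (h10 : v₂ ≠ v₃) (h11 : v₂ ≠ v₄) (h12 : v₂ ≠ v₅) (h12' : v₂ ≠ v₆)
    (h13 : v₃ ≠ v₄) (h14 : v₃ ≠ v₅) (h14' : v₃ ≠ v₆)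
    (h15 : v₄ ≠ v₅) (h15' : v₄ ≠ v₆) (h16 : v₅ ≠ v₆)
    (e01 : G.Adj v₀ v₁) (e12 : G.Adj v₁ v₂) (e23 : G.Adj v₂ v₃) (e30 : G.Adj v₃ v₀)
    (e04 : G.Adj v₀ v₄) (e45 : G.Adj v₄ v₅) (e56 : G.Adj v₅ v₆) (e60 : G.Adj v₆ v₀) :
    Contains dumbbell440 G :=
  contains_dumbbell G (v := ![v₀, v₁, v₂, v₃, v₄, v₅, v₆])
    (inj7 h1 h2 h3 h4 h5 h5' h6 h7 h8 h9 h9' h10 h11 h12 h12' h13 h14 h14' h15 h15' h16)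
    e01 e12 e23 e30 e04 e45 e56 e60

/-- The codegree of `a` and `b`. -/
def cod (G : SimpleGraph (Fin n)) [DecidableRel G.Adj] (a b : Fin n) : ℕ :=
  #(G.neighborFinset a ∩ G.neighborFinset b)

lemma cod_le_two (h₂ : ¬ Contains theta222 G) {a b : Fin n} (hab : a ≠ b) :
    cod G a b ≤ 2 := by
  by_contra h
  rw [not_le] at h
  obtain ⟨w₁, hw₁, w₂, hw₂, w₃, hw₃, h12, h13, h23⟩ := Finset.two_lt_card.mp h
  simp only [mem_inter, mem_neighborFinset] at hw₁ hw₂ hw₃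
  exact h₂ (contains_theta222 G hab h12 h13 h23 hw₁.1 hw₂.1 hw₃.1 hw₁.2 hw₂.2 hw₃.2)

lemma cod_eq_zero_of_adj (h₁ : ¬ Contains triangleGraph G) {a b : Fin n}
    (hab : G.Adj a b) : cod G a b = 0 := by
  rw [cod, Finset.card_eq_zero, Finset.eq_empty_iff_forall_notMem]
  intro w hw
  simp only [mem_inter, mem_neighborFinset] at hw
  exact h₁ (contains_triangle G hab hw.1 hw.2)

/-- The key structural lemma: a vertex cannot be in two different codegree-`2` pairs. -/
lemma not_two_special (h₁ : ¬ Contains triangleGraph G) (h₂ : ¬ Contains theta222 G)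
    (h₃ : ¬ Contains theta133 G) (h₄ : ¬ Contains dumbbell440 G)
    {a b c : Fin n} (hab : a ≠ b) (hac : a ≠ c) (hbc : b ≠ c)
    (hcb : 2 ≤ cod G a b) (hcc : 2 ≤ cod G a c) : False := by
  obtain ⟨w, hw, x, hx, hwx⟩ := Finset.one_lt_card.mp hcb
  obtain ⟨w', hw', x', hx', hwx'⟩ := Finset.one_lt_card.mp hcc
  simp only [mem_inter, mem_neighborFinset] at hw hx hw' hx'
  obtain ⟨haw, hbw⟩ := hw
  obtain ⟨hax, hbx⟩ := hx
  obtain ⟨haw', hcw'⟩ := hw'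
  obtain ⟨hax', hcx'⟩ := hx'
  -- a is nonadjacent to b and to c (else triangle)
  have hnab : ¬ G.Adj a b := fun h => h₁ (contains_triangle G h haw hbw)
  have hnac : ¬ G.Adj a c := fun h => h₁ (contains_triangle G h haw' hcw')
  -- hence c ∉ {w, x} and b ∉ {w', x'}
  have hcw : c ≠ w := fun h => hnac (h ▸ haw)
  have hcx : c ≠ x := fun h => hnac (h ▸ hax)
  have hbw' : b ≠ w' := fun h => hnab (h ▸ haw')
  have hbx' : b ≠ x' := fun h => hnab (h ▸ hax')
  -- basic distinctness
  have haw0 : a ≠ w := haw.ne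
  have hax0 : a ≠ x := hax.ne
  have haw0' : a ≠ w' := haw'.ne
  have hax0' : a ≠ x' := hax'.ne
  have hbw0 : b ≠ w := (hbw.ne)
  have hbx0 : b ≠ x := (hbx.ne)
  have hcw0' : c ≠ w' := hcw'.ne
  have hcx0' : c ≠ x' := hcx'.ne
  by_cases h1 : w = w'
  · by_cases h2 : x = x'
    · subst h1; subst h2
      exact h₂ (contains_theta222 G hwx hab hac hbc haw.symm hbw.symm hcw'.symm
        hax.symm hbx.symm hcx'.symm)
    · -- θ(1,3,3) on (a, x', c, w, b, x) with chord a-w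
      subst h1
      exact h₃ (contains_theta133' (G := G) a x' c w b x
        (by first | assumption | (symm; assumption))
        (by first | assumption | (symm; assumption))
        (by first | assumption | (symm; assumption))
        (by first | assumption | (symm; assumption))
        (by first | assumption | (symm; assumption))
        (by first | assumption | (symm; assumption))
        (by first | assumption | (symm; assumption))
        (by first | assumption | (symm; assumption))
        (by first | assumption | (symm; assumption))
        (by first | assumption | (symm; assumption))
        (by first | assumption | (symm; assumption))
        (by first | assumption | (symm; assumption))
        (by first | assumption | (symm; assumption))
        (by first | assumption | (symm; assumption))
        (by first | assumption | (symm; assumption))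
        hax' hcx'.symm hcw' hbw.symm hbx hax.symm haw)
  · by_cases h2 : x = x'
    · -- θ(1,3,3) on (a, w', c, x, b, w) with chord a-x
      subst h2
      exact h₃ (contains_theta133' (G := G) a w' c x b w
        (by first | assumption | (symm; assumption))
        (by first | assumption | (symm; assumption))
        (by first | assumption | (symm; assumption))
        (by first | assumption | (symm; assumption))
        (by first | assumption | (symm; assumption))
        (by first | assumption | (symm; assumption))
        (by first | assumption | (symm; assumption))
        (by first | assumption | (symm; assumption))
        (by first | assumption | (symm; assumption))
        (by first | assumption | (symm; assumption))
        (by first | assumption | (symm; assumption))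
        (by first | assumption | (symm; assumption))
        (by first | assumption | (symm; assumption))
        (by first | assumption | (symm; assumption))
        (by first | assumption | (symm; assumption))
        haw' hcw'.symm hcx' hbx.symm hbw haw.symm hax)
    · by_cases h3 : w = x'
      · by_cases h4 : x = w'
        · subst h3; subst h4
          exact h₂ (contains_theta222 G hwx hab hac hbc haw.symm hbw.symm hcx'.symm
            hax.symm hbx.symm hcw'.symm)
        · -- θ(1,3,3) on (a, w', c, w, b, x) with chord a-w ; here w = x'
          subst h3
          exact h₃ (contains_theta133' (G := G) a w' c w b x
            (by first | assumption | (symm; assumption))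
        (by first | assumption | (symm; assumption))
        (by first | assumption | (symm; assumption))
        (by first | assumption | (symm; assumption))
        (by first | assumption | (symm; assumption))
        (by first | assumption | (symm; assumption))
        (by first | assumption | (symm; assumption))
        (by first | assumption | (symm; assumption))
        (by first | assumption | (symm; assumption))
        (by first | assumption | (symm; assumption))
        (by first | assumption | (symm; assumption))
        (by first | assumption | (symm; assumption))
        (by first | assumption | (symm; assumption))
        (by first | assumption | (symm; assumption))
        (by first | assumption | (symm; assumption))
            haw' hcw'.symm hcx' hbw.symm hbx hax.symm haw)
      · by_cases h4 : x = w'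
        · -- θ(1,3,3) on (a, x', c, x, b, w) with chord a-x ; here x = w'
          subst h4
          exact h₃ (contains_theta133' (G := G) a x' c x b w
            (by first | assumption | (symm; assumption))
        (by first | assumption | (symm; assumption))
        (by first | assumption | (symm; assumption))
        (by first | assumption | (symm; assumption))
        (by first | assumption | (symm; assumption))
        (by first | assumption | (symm; assumption))
        (by first | assumption | (symm; assumption))
        (by first | assumption | (symm; assumption))
        (by first | assumption | (symm; assumption))
        (by first | assumption | (symm; assumption))
        (by first | assumption | (symm; assumption))
        (by first | assumption | (symm; assumption))
        (by first | assumption | (symm; assumption))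
        (by first | assumption | (symm; assumption))
        (by first | assumption | (symm; assumption))
            hax' hcx'.symm hcw' hbx.symm hbw haw.symm hax)
        · -- dumbbell on (a, w, b, x, w', c, x')
          exact h₄ (contains_dumbbell' (G := G) a w b x w' c x'
            (by first | assumption | (symm; assumption))
            (by first | assumption | (symm; assumption))
            (by first | assumption | (symm; assumption))
            (by first | assumption | (symm; assumption))
            (by first | assumption | (symm; assumption))
            (by first | assumption | (symm; assumption))
            (by first | assumption | (symm; assumption))
            (by first | assumption | (symm; assumption))
            (by first | assumption | (symm; assumption))
            (by first | assumption | (symm; assumption))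
            (by first | assumption | (symm; assumption))
            (by first | assumption | (symm; assumption))
            (by first | assumption | (symm; assumption))
            (by first | assumption | (symm; assumption))
            (by first | assumption | (symm; assumption))
            (by first | assumption | (symm; assumption))
            (by first | assumption | (symm; assumption))
            (by first | assumption | (symm; assumption))
            (by first | assumption | (symm; assumption))
            (by first | assumption | (symm; assumption))
            (by first | assumption | (symm; assumption))
            haw hbw.symm hbx hax.symm haw' hcw'.symm hcx' hax'.symm)

end Core

set_option maxHeartbeats 1600000 in
/-- For every `n ≥ 5`, every simple graph on `n` vertices containing no subgraph isomorphic
to any of `C₃`, `θ(2,2,2)`, `θ(1,3,3)`, `D(4,4;0)` has at most `n(√(24n−23)−1)/8` edges. -/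
theorem stmt2 (n : ℕ) (hn : 5 ≤ n) (G : SimpleGraph (Fin n))
    (h₁ : ¬ Contains triangleGraph G) (h₂ : ¬ Contains theta222 G)
    (h₃ : ¬ Contains theta133 G) (h₄ : ¬ Contains dumbbell440 G) :
    (edgeCount G : ℝ) ≤ n * (Real.sqrt (24 * (n : ℝ) - 23) - 1) / 8 := by
  classical
  letI : DecidableRel G.Adj := fun a b => Classical.dec _
  open Finset in
  set e := #G.edgeFinset with he
  have hE : edgeCount G = e := by
    rw [edgeCount, Nat.card_eq_fintype_card, he, SimpleGraph.edgeFinset_card]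
  have hd : ∑ v, G.degree v = 2 * e := G.sum_degrees_eq_twice_card_edges
  -- codegree as a sum of indicators
  have hcodsum : ∀ a b : Fin n,
      cod G a b = ∑ v : Fin n, (if G.Adj a v ∧ G.Adj b v then 1 else 0) := by
    intro a b
    rw [cod, neighborFinset_eq_filter, neighborFinset_eq_filter, ← Finset.filter_and,
      Finset.card_filter]
  have hdeg2 : ∀ v : Fin n, (∑ a : Fin n, if G.Adj a v then 1 else 0) = G.degree v := by
    intro v
    rw [← Finset.card_filter]
    have : Finset.univ.filter (fun a => G.Adj a v) = Finset.univ.filter (G.Adj v) :=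
      Finset.filter_congr fun a _ => by rw [adj_comm]
    rw [this, ← neighborFinset_eq_filter, card_neighborFinset_eq_degree]
  -- double counting paths of length two
  have hsq : ∑ a : Fin n, ∑ b : Fin n, cod G a b = ∑ v : Fin n, (G.degree v)^2 := by
    have hmul : ∀ (p q : Prop) (_ : Decidable p) (_ : Decidable q),
        (if p ∧ q then (1:ℕ) else 0) = (if p then 1 else 0) * (if q then 1 else 0) := by
      intro p q _ _
      by_cases hp : p <;> by_cases hq : q <;> simp [hp, hq]
    simp_rw [hcodsum, hmul]
    calc ∑ a : Fin n, ∑ b : Fin n, ∑ v : Fin n,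
            ((if G.Adj a v then 1 else 0) * if G.Adj b v then 1 else 0)
        = ∑ a : Fin n, ∑ v : Fin n, ∑ b : Fin n,
            ((if G.Adj a v then 1 else 0) * if G.Adj b v then 1 else 0) :=
          Finset.sum_congr rfl fun a _ => Finset.sum_comm
      _ = ∑ v : Fin n, ∑ a : Fin n, ∑ b : Fin n,
            ((if G.Adj a v then 1 else 0) * if G.Adj b v then 1 else 0) := Finset.sum_comm
      _ = ∑ v : Fin n, (G.degree v)^2 := by
          refine Finset.sum_congr rfl fun v _ => ?_
          rw [← Finset.sum_mul_sum, hdeg2, sq]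
  have hcodself : ∀ a, cod G a a = G.degree a := by
    intro a
    rw [cod, Finset.inter_self, card_neighborFinset_eq_degree]
  -- the per-vertex bound
  have hrow : ∀ a : Fin n, ∑ b : Fin n, cod G a b ≤ n := by
    intro a
    rw [← Finset.add_sum_erase Finset.univ _ (Finset.mem_univ a), hcodself]
    rw [← Finset.sum_filter_add_sum_filter_not (Finset.univ.erase a) (fun b => G.Adj a b)]
    have hadj0 : ∑ b ∈ (Finset.univ.erase a).filter (fun b => G.Adj a b), cod G a b = 0 :=
      Finset.sum_eq_zero fun b hb => cod_eq_zero_of_adj h₁ (Finset.mem_filter.mp hb).2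
    rw [hadj0, zero_add]
    set T := (Finset.univ.erase a).filter (fun b => ¬ G.Adj a b) with hT
    set S := T.filter (fun b => 2 ≤ cod G a b) with hS
    have hScard : #S ≤ 1 := by
      rw [Finset.card_le_one]
      intro b hb c hc
      by_contra hbcne
      have hb' := Finset.mem_filter.mp hb
      have hc' := Finset.mem_filter.mp hc
      have hba : b ≠ a := (Finset.mem_erase.mp (Finset.mem_filter.mp hb'.1).1).1
      have hca : c ≠ a := (Finset.mem_erase.mp (Finset.mem_filter.mp hc'.1).1).1
      exact not_two_special h₁ h₂ h₃ h₄ hba.symm hca.symm hbcne hb'.2 hc'.2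
    have hsumS : ∑ b ∈ S, cod G a b ≤ #S * 2 := by
      have := Finset.sum_le_card_nsmul S (fun b => cod G a b) 2 ?_
      · simpa using this
      · intro b hb
        have hba : b ≠ a :=
          (Finset.mem_erase.mp (Finset.mem_filter.mp (Finset.mem_filter.mp hb).1).1).1
        exact cod_le_two h₂ hba.symm
    have hsumS' : ∑ b ∈ T.filter (fun b => ¬ 2 ≤ cod G a b), cod G a b ≤
        #(T.filter (fun b => ¬ 2 ≤ cod G a b)) * 1 := by
      have := Finset.sum_le_card_nsmul (T.filter (fun b => ¬ 2 ≤ cod G a b))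
        (fun b => cod G a b) 1 ?_
      · simpa using this
      · intro b hb
        have h2' : ¬ 2 ≤ cod G a b := (Finset.mem_filter.mp hb).2
        show cod G a b ≤ 1
        omega
    have hTsplit : #S + #(T.filter (fun b => ¬ 2 ≤ cod G a b)) = #T := by
      rw [hS]; exact Finset.card_filter_add_card_filter_not _
    have hTsum : ∑ b ∈ T, cod G a b =
        ∑ b ∈ S, cod G a b + ∑ b ∈ T.filter (fun b => ¬ 2 ≤ cod G a b), cod G a b := by
      rw [hS]; exact (Finset.sum_filter_add_sum_filter_not T _ _).symm
    beta_reduce at hsumS hsumS' hTsum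
    have hdegT : G.degree a + #T = n - 1 := by
      have h1 : (Finset.univ.erase a).filter (fun b => G.Adj a b) = G.neighborFinset a := by
        ext b
        simp only [Finset.mem_filter, Finset.mem_erase, Finset.mem_univ, true_and,
          mem_neighborFinset, and_true]
        exact ⟨fun h => h.2, fun h => ⟨h.ne', h⟩⟩
      have h2 := Finset.card_filter_add_card_filter_not
        (s := Finset.univ.erase a) (p := fun b => G.Adj a b)
      rw [h1] at h2
      rw [card_neighborFinset_eq_degree] at h2
      rwa [Finset.card_erase_of_mem (Finset.mem_univ a), Finset.card_univ,
        Fintype.card_fin] at h2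
    omega
  -- total bound on the sum of squared degrees
  have htot : ∑ v : Fin n, (G.degree v)^2 ≤ n * n := by
    rw [← hsq]
    calc ∑ a : Fin n, ∑ b : Fin n, cod G a b ≤ ∑ _a : Fin n, n :=
          Finset.sum_le_sum fun a _ => hrow a
      _ = n * n := by simp [mul_comm]
  -- Cauchy–Schwarz
  have he2 : 4 * e^2 ≤ n^3 := by
    have hcs := sq_sum_le_card_mul_sum_sq (s := (Finset.univ : Finset (Fin n)))
      (f := fun v => (G.degree v : ℤ))
    have h1 : ((∑ v, G.degree v : ℕ) : ℤ)^2 ≤ (n : ℤ) * ((∑ v, (G.degree v)^2 : ℕ) : ℤ) := by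
      push_cast
      simpa using hcs
    rw [hd] at h1
    have h2 : ((2 * e : ℕ) : ℤ)^2 ≤ (n : ℤ) * ((n * n : ℕ) : ℤ) := by
      refine h1.trans ?_
      have : ((∑ v, (G.degree v)^2 : ℕ) : ℤ) ≤ ((n * n : ℕ) : ℤ) := by exact_mod_cast htot
      exact mul_le_mul_of_nonneg_left this (by positivity)
    have h3 : (2 * e)^2 ≤ n * (n * n) := by exact_mod_cast h2
    nlinarith [h3]
  -- arithmetic: 2e + 3n ≤ n²
  have hB : 2 * e + 3 * n ≤ n^2 := by
    by_contra hcon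
    push_neg at hcon
    rcases (by omega : n = 5 ∨ 6 ≤ n) with rfl | h6
    · have h6e : 6 ≤ e := by omega
      nlinarith [he2, h6e]
    · have h2e : ((n:ℤ))^2 + 1 ≤ 2 * (e:ℤ) + 3 * (n:ℤ) := by exact_mod_cast hcon
      have he2' : 4 * (e:ℤ)^2 ≤ ((n:ℤ))^3 := by exact_mod_cast he2
      have h6' : (6:ℤ) ≤ (n:ℤ) := by exact_mod_cast h6
      have hE0 : (0:ℤ) ≤ (e:ℤ) := Int.ofNat_nonneg e
      have hstuff : (0:ℤ) ≤ (n:ℤ)^2 - 3*(n:ℤ) + 1 := by nlinarith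
      have hprod : (0:ℤ) ≤ (2*(e:ℤ) - ((n:ℤ)^2 - 3*(n:ℤ) + 1)) *
          (2*(e:ℤ) + ((n:ℤ)^2 - 3*(n:ℤ) + 1)) :=
        mul_nonneg (by linarith) (by linarith)
      have hpoly : (n:ℤ)^3 < ((n:ℤ)^2 - 3*(n:ℤ) + 1)^2 := by
        nlinarith [mul_nonneg (mul_nonneg (sub_nonneg.mpr h6')
            (by linarith : (0:ℤ) ≤ (n:ℤ) - 1)) (sq_nonneg (n:ℤ)),
          mul_nonneg (by linarith : (0:ℤ) ≤ (n:ℤ) - 1)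
            (by linarith : (0:ℤ) ≤ 5*(n:ℤ) - 1)]
      nlinarith [hprod, hpoly, he2']
  -- final real arithmetic
  rw [hE]
  have hn5 : (5:ℝ) ≤ (n:ℝ) := by exact_mod_cast hn
  have hn0 : (0:ℝ) < n := by linarith
  set s := Real.sqrt (24 * (n : ℝ) - 23) with hsdef
  have harg : (0:ℝ) ≤ 24 * (n:ℝ) - 23 := by linarith
  have hs2 : s^2 = 24 * (n:ℝ) - 23 := Real.sq_sqrt harg
  have hsnn : 0 ≤ s := Real.sqrt_nonneg _
  have hA : 4 * (e:ℝ)^2 ≤ (n:ℝ)^3 := by exact_mod_cast he2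
  have hB' : 2 * (e:ℝ) + 3 * n ≤ (n:ℝ)^2 := by exact_mod_cast hB
  have he0 : (0:ℝ) ≤ (e:ℝ) := by positivity
  have hkey : 8 * (e:ℝ) + n ≤ n * s := by
    have h1 : (8 * (e:ℝ) + n)^2 ≤ (n * s)^2 := by
      nlinarith [hA, hs2, mul_le_mul_of_nonneg_left hB' (by positivity : (0:ℝ) ≤ 8 * (n:ℝ))]
    exact le_of_pow_le_pow_left₀ (by norm_num) (by positivity) h1
  rw [le_div_iff₀ (by norm_num : (0:ℝ) < 8)]
  nlinarith [hkey]
end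

section
/- Let n ≥ 5 and let G be a simple graph on n vertices containing no subgraph isomorphic to any of C₃, θ(2,2,2), θ(1,3,3), or D(4,4;0), and having the maximum possible number of edges among all such graphs on n vertices. Then any two distinct vertices of G are joined by a path of length at most 3 (in particular G is connected with diameter at most 3). -/
open SimpleGraph

instance : DecidableRel theta133.Adj := fun a b =>
  decidable_of_iff ((s(a,b) = s(0,1) ∨ s(a,b) = s(1,2) ∨ s(a,b) = s(2,3) ∨ s(a,b) = s(3,4) ∨ s(a,b) = s(4,5) ∨ s(a,b) = s(5,0) ∨ s(a,b) = s(0,3)) ∧ a ≠ b)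
    (by simp [theta133, Set.mem_insert_iff])

instance : DecidableRel dumbbell440.Adj := fun a b =>
  decidable_of_iff ((s(a,b) = s(0,1) ∨ s(a,b) = s(1,2) ∨ s(a,b) = s(2,3) ∨ s(a,b) = s(3,0) ∨ s(a,b) = s(0,4) ∨ s(a,b) = s(4,5) ∨ s(a,b) = s(5,6) ∨ s(a,b) = s(6,0)) ∧ a ≠ b)
    (by simp [dumbbell440, Set.mem_insert_iff])

instance : DecidableRel theta222.Adj := fun a b =>
  decidable_of_iff (a.isLeft ∧ b.isRight ∨ a.isRight ∧ b.isLeft)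
    (by simp [theta222, completeBipartiteGraph])

instance : DecidableRel triangleGraph.Adj := fun a b =>
  decidable_of_iff (a ≠ b) (by simp [triangleGraph])

/-- The key local property: every edge of `H` lies on a short cycle, i.e. its endpoints
are joined by a walk of length `2` or `3` avoiding that edge. -/
def ShortDetour {V : Type*} (H : SimpleGraph V) : Prop :=
  ∀ a b, H.Adj a b →
    (∃ c, H.Adj a c ∧ H.Adj c b ∧ s(a,c) ≠ s(a,b) ∧ s(c,b) ≠ s(a,b)) ∨
    (∃ c d, H.Adj a c ∧ H.Adj c d ∧ H.Adj d b ∧ s(a,c) ≠ s(a,b) ∧ s(c,d) ≠ s(a,b) ∧ s(d,b) ≠ s(a,b))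

lemma shortDetour_triangle : ShortDetour triangleGraph := by unfold ShortDetour; decide
lemma shortDetour_theta222 : ShortDetour theta222 := by unfold ShortDetour; decide
lemma shortDetour_theta133 : ShortDetour theta133 := by unfold ShortDetour; decide
lemma shortDetour_dumbbell : ShortDetour dumbbell440 := by unfold ShortDetour; decide

lemma key {V : Type*} {n : ℕ} (H : SimpleGraph V) (G : SimpleGraph (Fin n)) (u v : Fin n)
    (hP : ShortDetour H) (hG : ¬ Contains H G)
    (hw : ∀ w : G.Walk u v, ¬ w.length ≤ 3) :
    ¬ Contains H (G ⊔ fromEdgeSet {s(u,v)}) := by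
  rintro ⟨f, hf, hfe⟩
  by_cases hall : ∀ ⦃a b⦄, H.Adj a b → G.Adj (f a) (f b)
  · exact hG ⟨f, hf, hall⟩
  push_neg at hall
  obtain ⟨a, b, hab, hnadj⟩ := hall
  have h' := hfe hab
  rw [sup_adj, fromEdgeSet_adj] at h'
  have heq : s(f a, f b) = s(u, v) := by
    rcases h' with h' | ⟨h', _⟩
    · exact absurd h' hnadj
    · simpa using h'
  -- any H-edge other than ab maps to a G-edge
  have hmap : ∀ ⦃x y⦄, H.Adj x y → s(x,y) ≠ s(a,b) → G.Adj (f x) (f y) := by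
    intro x y hxy hne
    have h'' := hfe hxy
    rw [sup_adj, fromEdgeSet_adj] at h''
    rcases h'' with h'' | ⟨h'', _⟩
    · exact h''
    simp only [Set.mem_singleton_iff] at h''
    exfalso
    have : s(f x, f y) = s(f a, f b) := h''.trans heq.symm
    rw [Sym2.eq_iff] at this
    rcases this with ⟨e1, e2⟩ | ⟨e1, e2⟩
    · exact hne (by rw [hf e1, hf e2])
    · exact hne (by rw [hf e1, hf e2, Sym2.eq_swap])
  -- from a detour in H, get a short walk u → v in G
  have main : ∀ (a' b' : Fin n), s(a', b') = s(u, v) →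
      (∃ c, G.Adj a' c ∧ G.Adj c b') ∨ (∃ c d, G.Adj a' c ∧ G.Adj c d ∧ G.Adj d b') → False := by
    intro a' b' hsab hcase
    rw [Sym2.eq_iff] at hsab
    rcases hsab with ⟨rfl, rfl⟩ | ⟨rfl, rfl⟩
    · rcases hcase with ⟨c, h1, h2⟩ | ⟨c, d, h1, h2, h3⟩
      · exact hw (Walk.cons h1 (Walk.cons h2 Walk.nil)) (by simp)
      · exact hw (Walk.cons h1 (Walk.cons h2 (Walk.cons h3 Walk.nil))) (by simp)
    · rcases hcase with ⟨c, h1, h2⟩ | ⟨c, d, h1, h2, h3⟩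
      · exact hw (Walk.cons h2.symm (Walk.cons h1.symm Walk.nil)) (by simp)
      · exact hw (Walk.cons h3.symm (Walk.cons h2.symm (Walk.cons h1.symm Walk.nil))) (by simp)
  apply main (f a) (f b) heq
  rcases hP a b hab with ⟨c, h1, h2, e1, e2⟩ | ⟨c, d, h1, h2, h3, e1, e2, e3⟩
  · exact Or.inl ⟨f c, hmap h1 e1, hmap h2 e2⟩
  · exact Or.inr ⟨f c, f d, hmap h1 e1, hmap h2 e2, hmap h3 e3⟩

/-- If `n ≥ 5` and `G` is a graph on `n` vertices containing none of `C₃`, `θ(2,2,2)`,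
`θ(1,3,3)`, `D(4,4;0)` as a subgraph and having the maximum number of edges among all such
graphs, then any two distinct vertices of `G` are joined by a path of length at most `3`. -/
theorem stmt3 (n : ℕ) (hn : 5 ≤ n) (G : SimpleGraph (Fin n))
    (h₁ : ¬ Contains triangleGraph G) (h₂ : ¬ Contains theta222 G)
    (h₃ : ¬ Contains theta133 G) (h₄ : ¬ Contains dumbbell440 G)
    (hmax : ∀ G' : SimpleGraph (Fin n),
      ¬ Contains triangleGraph G' → ¬ Contains theta222 G' → ¬ Contains theta133 G' →
        ¬ Contains dumbbell440 G' → edgeCount G' ≤ edgeCount G) :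
    ∀ u v : Fin n, u ≠ v → ∃ p : G.Walk u v, p.IsPath ∧ p.length ≤ 3 := by
  intro u v huv
  by_contra h
  push_neg at h
  have hw : ∀ w : G.Walk u v, ¬ w.length ≤ 3 := by
    intro w hl
    have := h w.bypass w.bypass_isPath
    have := w.length_bypass_le
    omega
  set G' := G ⊔ fromEdgeSet {s(u,v)} with hG'
  have hle := hmax G'
    (key triangleGraph G u v shortDetour_triangle h₁ hw)
    (key theta222 G u v shortDetour_theta222 h₂ hw)
    (key theta133 G u v shortDetour_theta133 h₃ hw)
    (key dumbbell440 G u v shortDetour_dumbbell h₄ hw)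
  have hnadj : ¬ G.Adj u v := by
    intro hadj
    exact hw (Walk.cons hadj Walk.nil) (by simp)
  have hsub : G.edgeSet ⊂ G'.edgeSet := by
    constructor
    · exact edgeSet_mono le_sup_left
    · intro hcon
      apply hnadj
      have : s(u,v) ∈ G'.edgeSet := by
        rw [mem_edgeSet, hG', sup_adj, fromEdgeSet_adj]
        exact Or.inr ⟨rfl, huv⟩
      exact (mem_edgeSet G).mp (hcon this)
  have hlt : edgeCount G < edgeCount G' := by
    unfold edgeCount
    rw [Nat.card_coe_set_eq, Nat.card_coe_set_eq]
    exact Set.ncard_lt_ncard hsub (Set.toFinite _)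
  omega
end

section
/- Let G be a simple graph containing no subgraph isomorphic to any of C₃, θ(2,2,2), θ(1,3,3), or D(4,4;0). If {u,v} and {x,y} are two distinct unordered pairs of vertices of G such that u and v have at least two common neighbors and x and y have at least two common neighbors, then the sets {u,v} and {x,y} are disjoint. -/
open SimpleGraph

lemma contains_tri {V : Type*} (G : SimpleGraph V) (a b c : V)
    (hab : G.Adj a b) (hbc : G.Adj b c) (hac : G.Adj a c) :
    Contains triangleGraph G := by
  refine ⟨![a,b,c], ?_, ?_⟩
  · have h1 := hab.ne; have h2 := hbc.ne; have h3 := hac.ne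
    intro i j h
    fin_cases i <;> fin_cases j <;> simp_all
  · intro i j hij
    fin_cases i <;> fin_cases j <;> simp_all [triangleGraph] <;>
      first | exact hab | exact hab.symm | exact hbc | exact hbc.symm
            | exact hac | exact hac.symm

lemma contains_t222 {V : Type*} (G : SimpleGraph V) (p q a b c : V)
    (hpq : p ≠ q) (hab : a ≠ b) (hac : a ≠ c) (hbc : b ≠ c)
    (hap : G.Adj a p) (hbp : G.Adj b p) (hcp : G.Adj c p)
    (haq : G.Adj a q) (hbq : G.Adj b q) (hcq : G.Adj c q) :
    Contains theta222 G := by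
  refine ⟨Sum.elim ![p,q] ![a,b,c], ?_, ?_⟩
  · have := hap.ne; have := hbp.ne; have := hcp.ne
    have := haq.ne; have := hbq.ne; have := hcq.ne
    rintro (i|i) (j|j) h <;> fin_cases i <;> fin_cases j <;> simp_all
  · rintro (i|i) (j|j) hij <;> fin_cases i <;> fin_cases j <;>
      simp_all [theta222] <;>
      first | exact hap | exact hap.symm | exact hbp | exact hbp.symm
            | exact hcp | exact hcp.symm | exact haq | exact haq.symm
            | exact hbq | exact hbq.symm | exact hcq | exact hcq.symm

lemma contains_t133 {V : Type*} (G : SimpleGraph V) (v0 v1 v2 v3 v4 v5 : V)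
    (e01 : G.Adj v0 v1) (e12 : G.Adj v1 v2) (e23 : G.Adj v2 v3)
    (e34 : G.Adj v3 v4) (e45 : G.Adj v4 v5) (e50 : G.Adj v5 v0)
    (e03 : G.Adj v0 v3)
    (h02 : v0 ≠ v2) (h04 : v0 ≠ v4) (h13 : v1 ≠ v3) (h14 : v1 ≠ v4)
    (h15 : v1 ≠ v5) (h24 : v2 ≠ v4) (h25 : v2 ≠ v5) (h35 : v3 ≠ v5) :
    Contains theta133 G := by
  have n01 := e01.ne; have n12 := e12.ne; have n23 := e23.ne
  have n34 := e34.ne; have n45 := e45.ne; have n05 := e50.ne.symm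
  have n03 := e03.ne
  refine ⟨![v0,v1,v2,v3,v4,v5], ?_, ?_⟩
  · intro i j h
    fin_cases i <;> fin_cases j <;>
      first
      | rfl
      | exact absurd h n01 | exact absurd h n01.symm
      | exact absurd h n12 | exact absurd h n12.symm
      | exact absurd h n23 | exact absurd h n23.symm
      | exact absurd h n34 | exact absurd h n34.symm
      | exact absurd h n45 | exact absurd h n45.symm
      | exact absurd h n05 | exact absurd h n05.symm
      | exact absurd h n03 | exact absurd h n03.symm
      | exact absurd h h02 | exact absurd h h02.symm
      | exact absurd h h04 | exact absurd h h04.symm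
      | exact absurd h h13 | exact absurd h h13.symm
      | exact absurd h h14 | exact absurd h h14.symm
      | exact absurd h h15 | exact absurd h h15.symm
      | exact absurd h h24 | exact absurd h h24.symm
      | exact absurd h h25 | exact absurd h h25.symm
      | exact absurd h h35 | exact absurd h h35.symm
  · intro i j hij
    rw [theta133, fromEdgeSet_adj] at hij
    obtain ⟨hmem, -⟩ := hij
    simp only [Set.mem_insert_iff, Set.mem_singleton_iff, Sym2.eq_iff] at hmem
    rcases hmem with (h|h|h|h|h|h|h) <;> rcases h with (⟨rfl,rfl⟩|⟨rfl,rfl⟩) <;>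
      first
      | exact e01 | exact e01.symm | exact e12 | exact e12.symm
      | exact e23 | exact e23.symm | exact e34 | exact e34.symm
      | exact e45 | exact e45.symm | exact e50 | exact e50.symm
      | exact e03 | exact e03.symm

lemma contains_d440 {V : Type*} (G : SimpleGraph V) (v0 v1 v2 v3 v4 v5 v6 : V)
    (e01 : G.Adj v0 v1) (e12 : G.Adj v1 v2) (e23 : G.Adj v2 v3)
    (e30 : G.Adj v3 v0) (e04 : G.Adj v0 v4) (e45 : G.Adj v4 v5)
    (e56 : G.Adj v5 v6) (e60 : G.Adj v6 v0)
    (h02 : v0 ≠ v2) (h05 : v0 ≠ v5) (h13 : v1 ≠ v3) (h14 : v1 ≠ v4)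
    (h15 : v1 ≠ v5) (h16 : v1 ≠ v6) (h24 : v2 ≠ v4) (h25 : v2 ≠ v5)
    (h26 : v2 ≠ v6) (h34 : v3 ≠ v4) (h35 : v3 ≠ v5) (h36 : v3 ≠ v6)
    (h46 : v4 ≠ v6) :
    Contains dumbbell440 G := by
  have n01 := e01.ne; have n12 := e12.ne; have n23 := e23.ne
  have n03 := e30.ne.symm; have n04 := e04.ne; have n45 := e45.ne
  have n56 := e56.ne; have n06 := e60.ne.symm
  refine ⟨![v0,v1,v2,v3,v4,v5,v6], ?_, ?_⟩
  · intro i j h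
    fin_cases i <;> fin_cases j <;>
      first
      | rfl
      | exact absurd h n01 | exact absurd h n01.symm
      | exact absurd h n12 | exact absurd h n12.symm
      | exact absurd h n23 | exact absurd h n23.symm
      | exact absurd h n03 | exact absurd h n03.symm
      | exact absurd h n04 | exact absurd h n04.symm
      | exact absurd h n45 | exact absurd h n45.symm
      | exact absurd h n56 | exact absurd h n56.symm
      | exact absurd h n06 | exact absurd h n06.symm
      | exact absurd h h02 | exact absurd h h02.symm
      | exact absurd h h05 | exact absurd h h05.symm
      | exact absurd h h13 | exact absurd h h13.symm
      | exact absurd h h14 | exact absurd h h14.symm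
      | exact absurd h h15 | exact absurd h h15.symm
      | exact absurd h h16 | exact absurd h h16.symm
      | exact absurd h h24 | exact absurd h h24.symm
      | exact absurd h h25 | exact absurd h h25.symm
      | exact absurd h h26 | exact absurd h h26.symm
      | exact absurd h h34 | exact absurd h h34.symm
      | exact absurd h h35 | exact absurd h h35.symm
      | exact absurd h h36 | exact absurd h h36.symm
      | exact absurd h h46 | exact absurd h h46.symm
  · intro i j hij
    rw [dumbbell440, fromEdgeSet_adj] at hij
    obtain ⟨hmem, -⟩ := hij
    simp only [Set.mem_insert_iff, Set.mem_singleton_iff, Sym2.eq_iff] at hmem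
    rcases hmem with (h|h|h|h|h|h|h|h) <;> rcases h with (⟨rfl,rfl⟩|⟨rfl,rfl⟩) <;>
      first
      | exact e01 | exact e01.symm | exact e12 | exact e12.symm
      | exact e23 | exact e23.symm | exact e30 | exact e30.symm
      | exact e04 | exact e04.symm | exact e45 | exact e45.symm
      | exact e56 | exact e56.symm | exact e60 | exact e60.symm

/-- Key lemma: no vertex `a` can belong to two pairs `{a,b}`, `{a,c}` each having
two common neighbors. -/
lemma key_lemma {V : Type*} (G : SimpleGraph V)
    (h₁ : ¬ Contains triangleGraph G) (h₂ : ¬ Contains theta222 G)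
    (h₃ : ¬ Contains theta133 G) (h₄ : ¬ Contains dumbbell440 G)
    (a b c p q r s : V) (hab : a ≠ b) (hac : a ≠ c) (hbc : b ≠ c)
    (hpq : p ≠ q) (hrs : r ≠ s)
    (hap : G.Adj a p) (hbp : G.Adj b p) (haq : G.Adj a q) (hbq : G.Adj b q)
    (har : G.Adj a r) (hcr : G.Adj c r) (has : G.Adj a s) (hcs : G.Adj c s) :
    False := by
  have notri : ∀ x y z : V, G.Adj x y → G.Adj y z → G.Adj x z → False :=
    fun x y z hxy hyz hxz => h₁ (contains_tri G x y z hxy hyz hxz)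
  have hbr : b ≠ r := fun h => notri a b p (by rw [h]; exact har) hbp hap
  have hbs : b ≠ s := fun h => notri a b p (by rw [h]; exact has) hbp hap
  have hcp : c ≠ p := fun h => notri a c r (by rw [h]; exact hap) hcr har
  have hcq : c ≠ q := fun h => notri a c r (by rw [h]; exact haq) hcr har
  by_cases hpr : p = r
  · by_cases hqs : q = s
    · exact h₂ (contains_t222 G p q a b c hpq hab hac hbc hap hbp
        (by rw [hpr]; exact hcr) haq hbq (by rw [hqs]; exact hcs))
    · exact h₃ (contains_t133 G a q b p c s haq hbq.symm hbp
        (by rw [hpr]; exact hcr.symm) hcs has.symm hap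
        hab hac hpq.symm hcq.symm hqs hbc hbs (by rw [hpr]; exact hrs))
  · by_cases hps : p = s
    · by_cases hqr : q = r
      · exact h₂ (contains_t222 G p q a b c hpq hab hac hbc hap hbp
          (by rw [hps]; exact hcs) haq hbq (by rw [hqr]; exact hcr))
      · exact h₃ (contains_t133 G a q b p c r haq hbq.symm hbp
          (by rw [hps]; exact hcs.symm) hcr har.symm hap
          hab hac hpq.symm hcq.symm hqr hbc hbr hpr)
    · by_cases hqr : q = r
      · exact h₃ (contains_t133 G a p b q c s hap hbp.symm hbq
          (by rw [hqr]; exact hcr.symm) hcs has.symm haq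
          hab hac hpq hcp.symm hps hbc hbs (by rw [hqr]; exact hrs))
      · by_cases hqs : q = s
        · exact h₃ (contains_t133 G a p b q c r hap hbp.symm hbq
            (by rw [hqs]; exact hcs.symm) hcr har.symm haq
            hab hac hpq hcp.symm hpr hbc hbr hqr)
        · exact h₄ (contains_d440 G a p b q r c s hap hbp.symm hbq haq.symm
            har hcr.symm hcs has.symm
            hab hac hpq hpr hcp.symm hps hbr hbc hbs hqr hcq.symm hqs hrs)

/-- In a graph containing none of `C₃`, `θ(2,2,2)`, `θ(1,3,3)`, `D(4,4;0)` as a subgraph,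
any two distinct unordered pairs of vertices each having at least two common neighbors
are disjoint. -/
theorem stmt4 {V : Type*} (G : SimpleGraph V)
    (h₁ : ¬ Contains triangleGraph G) (h₂ : ¬ Contains theta222 G)
    (h₃ : ¬ Contains theta133 G) (h₄ : ¬ Contains dumbbell440 G)
    (u v x y : V) (huv : u ≠ v) (hxy : x ≠ y)
    (hpairs : s(u, v) ≠ s(x, y))
    (hcn₁ : ∃ p q : V, p ≠ q ∧ G.Adj u p ∧ G.Adj v p ∧ G.Adj u q ∧ G.Adj v q)
    (hcn₂ : ∃ p q : V, p ≠ q ∧ G.Adj x p ∧ G.Adj y p ∧ G.Adj x q ∧ G.Adj y q) :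
    u ≠ x ∧ u ≠ y ∧ v ≠ x ∧ v ≠ y := by
  obtain ⟨p, q, hpq, hup, hvp, huq, hvq⟩ := hcn₁
  obtain ⟨r, s, hrs, hxr, hyr, hxs, hys⟩ := hcn₂
  refine ⟨?_, ?_, ?_, ?_⟩
  · rintro rfl
    have hvy : v ≠ y := fun h => hpairs (by rw [h])
    exact key_lemma G h₁ h₂ h₃ h₄ u v y p q r s huv hxy hvy hpq hrs
      hup hvp huq hvq hxr hyr hxs hys
  · rintro rfl
    have hvx : v ≠ x := fun h => hpairs (by rw [h, Sym2.eq_swap])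
    exact key_lemma G h₁ h₂ h₃ h₄ u v x p q r s huv hxy.symm hvx hpq hrs
      hup hvp huq hvq hyr hxr hys hxs
  · rintro rfl
    have huy : u ≠ y := fun h => hpairs (by rw [h, Sym2.eq_swap])
    exact key_lemma G h₁ h₂ h₃ h₄ v u y p q r s huv.symm hxy huy hpq hrs
      hvp hup hvq huq hxr hyr hxs hys
  · rintro rfl
    have hux : u ≠ x := fun h => hpairs (by rw [h, Sym2.eq_swap])
    exact key_lemma G h₁ h₂ h₃ h₄ v u x p q r s huv.symm hxy.symm hux hpq hrs
      hvp hup hvq huq hyr hxr hys hxs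
end

section
/- Let H be a graph, let n ≥ 5 be an integer, and let f : ℕ → ℕ. Suppose ex(n, H) = f(n) and (n−1)(f(n+1)+1) − (n+1)f(n) ∈ {−1, 0}. Then every H-free simple graph on n+1 vertices with exactly f(n+1)+1 edges has minimum degree exactly f(n+1) − f(n) + 1. -/
open SimpleGraph

/-- The Turán number `ex(m, H)`: the maximum number of edges of an `H`-free simple graph
on `m` vertices. -/
noncomputable def exNum (m : ℕ) {β : Type*} (H : SimpleGraph β) : ℕ :=
  sSup {e : ℕ | ∃ G : SimpleGraph (Fin m), ¬ Contains H G ∧ edgeCount G = e}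

lemma edgeCount_eq_card {α : Type*} [Fintype α] (G : SimpleGraph α) [DecidableRel G.Adj] :
    edgeCount G = G.edgeFinset.card := by
  rw [edgeCount, Nat.card_eq_fintype_card, ← SimpleGraph.edgeFinset_card]

lemma exNum_le_bound (m : ℕ) {β : Type*} (H : SimpleGraph β)
    (G' : SimpleGraph (Fin m)) (hfree : ¬ Contains H G') :
    edgeCount G' ≤ exNum m H := by
  classical
  apply le_csSup
  · refine ⟨Fintype.card (Sym2 (Fin m)), ?_⟩
    rintro x ⟨G'', -, rfl⟩
    rw [edgeCount_eq_card]
    exact (Finset.card_le_card (Finset.subset_univ _)).trans (le_of_eq (Finset.card_univ))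
  · exact ⟨G', hfree, rfl⟩

/-- If `ex(n, H) = f(n)` and `(n−1)(f(n+1)+1) − (n+1)f(n) ∈ {−1, 0}`, then every `H`-free
graph on `n+1` vertices with exactly `f(n+1)+1` edges has minimum degree exactly
`f(n+1) − f(n) + 1`. -/
theorem stmt7 {β : Type*} (H : SimpleGraph β) (n : ℕ) (hn : 5 ≤ n) (f : ℕ → ℕ)
    (hex : exNum n H = f n)
    (hF : ((n : ℤ) - 1) * ((f (n + 1) : ℤ) + 1) - ((n : ℤ) + 1) * (f n : ℤ) ∈
      ({-1, 0} : Set ℤ))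
    (G : SimpleGraph (Fin (n + 1))) [DecidableRel G.Adj]
    (hfree : ¬ Contains H G) (hcard : edgeCount G = f (n + 1) + 1) :
    (G.minDegree : ℤ) = (f (n + 1) : ℤ) - (f n : ℤ) + 1 := by
  classical
  obtain ⟨v, hv⟩ := G.exists_minimal_degree_vertex
  -- G' : deletion of v
  set G' : SimpleGraph (Fin n) := G.comap v.succAbove with hG'
  have hfree' : ¬ Contains H G' := by
    rintro ⟨g, hginj, hgadj⟩
    exact hfree ⟨v.succAbove ∘ g, (Fin.succAbove_right_injective).comp hginj,
      fun a b hab => hgadj hab⟩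
  -- edge count inequality
  have hsub : G.edgeFinset ⊆ G.incidenceFinset v ∪ G'.edgeFinset.image (Sym2.map v.succAbove) := by
    intro e he
    rw [SimpleGraph.mem_edgeFinset] at he
    induction e with
    | h a b =>
      by_cases hav : a = v
      · exact Finset.mem_union_left _ (by
          rw [SimpleGraph.mem_incidenceFinset]
          exact ⟨he, by simp [hav]⟩)
      by_cases hbv : b = v
      · exact Finset.mem_union_left _ (by
          rw [SimpleGraph.mem_incidenceFinset]
          exact ⟨he, by simp [hbv]⟩)
      · obtain ⟨a', ha'⟩ := Fin.exists_succAbove_eq hav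
        obtain ⟨b', hb'⟩ := Fin.exists_succAbove_eq hbv
        refine Finset.mem_union_right _ (Finset.mem_image.mpr ⟨s(a', b'), ?_, by simp [ha', hb']⟩)
        rw [SimpleGraph.mem_edgeFinset]
        show G.Adj (v.succAbove a') (v.succAbove b')
        rw [ha', hb']; exact he
  have hA : f (n+1) + 1 ≤ f n + G.minDegree := by
    have h1 : G.edgeFinset.card ≤ G.degree v + G'.edgeFinset.card := by
      calc G.edgeFinset.card ≤ (G.incidenceFinset v ∪ G'.edgeFinset.image (Sym2.map v.succAbove)).card :=
            Finset.card_le_card hsub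
        _ ≤ (G.incidenceFinset v).card + (G'.edgeFinset.image (Sym2.map v.succAbove)).card :=
            Finset.card_union_le _ _
        _ ≤ G.degree v + G'.edgeFinset.card := by
            rw [SimpleGraph.card_incidenceFinset_eq_degree]
            exact Nat.add_le_add_left (Finset.card_image_le) _
    have h2 : G'.edgeFinset.card ≤ f n := by
      rw [← edgeCount_eq_card, ← hex]
      exact exNum_le_bound n H G' hfree'
    rw [← hcard, edgeCount_eq_card, hv]
    omega
  -- degree sum
  have hB : (n + 1) * G.minDegree ≤ 2 * (f (n+1) + 1) := by
    have := G.sum_degrees_eq_twice_card_edges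
    have hle : ∀ w : Fin (n+1), G.minDegree ≤ G.degree w := fun w => G.minDegree_le_degree w
    have : (n + 1) * G.minDegree ≤ ∑ w, G.degree w := by
      calc (n + 1) * G.minDegree = ∑ _w : Fin (n+1), G.minDegree := by
            simp [Finset.sum_const, Finset.card_univ, mul_comm]
        _ ≤ ∑ w, G.degree w := Finset.sum_le_sum (fun w _ => hle w)
    rw [G.sum_degrees_eq_twice_card_edges, ← edgeCount_eq_card, hcard] at this
    exact this
  -- arithmetic
  have hA' : (f (n+1) : ℤ) + 1 ≤ f n + G.minDegree := by exact_mod_cast hA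
  have hB' : ((n : ℤ) + 1) * G.minDegree ≤ 2 * (f (n+1) + 1) := by exact_mod_cast hB
  have hn' : (5 : ℤ) ≤ n := by exact_mod_cast hn
  have hF' : ((n : ℤ) - 1) * ((f (n + 1) : ℤ) + 1) - ((n : ℤ) + 1) * (f n : ℤ) = -1 ∨
      ((n : ℤ) - 1) * ((f (n + 1) : ℤ) + 1) - ((n : ℤ) + 1) * (f n : ℤ) = 0 := by
    simpa using hF
  rcases hF' with hF' | hF' <;> nlinarith [hA', hB', hn', sq_nonneg ((n:ℤ) - 1)]
end

section
/- Let G be a finite bipartite simple graph with parts L and R (every edge joins a vertex of L to a vertex of R) whose girth equals 8, and suppose that any two cycles of length 8 in G with distinct edge sets have no common vertex belonging to L. Let S ⊆ L be a set such that every vertex of R has at most 2 neighbors in S, and let G_VN be the simple graph on vertex set S in which two distinct vertices u, w ∈ S are adjacent if and only if some vertex of R is adjacent in G to both u and w. Then G_VN contains no subgraph isomorphic to any of C₃, θ(2,2,2), θ(1,3,3), or D(4,4;0). -/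
open SimpleGraph

/-- The VN graph of `S`: the simple graph on `S` in which two distinct vertices are adjacent
iff some check node (vertex of `R`) is adjacent in `G` to both of them. -/
def vnGraph {V : Type*} (G : SimpleGraph V) (R S : Set V) : SimpleGraph ↥S :=
  SimpleGraph.fromRel (fun u w => ∃ r ∈ R, G.Adj r ↑u ∧ G.Adj r ↑w)

lemma stmt11_eight_cycle {V : Type*} {G : SimpleGraph V} {L R : Set V} (hdisj : Disjoint L R)
    {v0 v1 v2 v3 r0 r1 r2 r3 : V}
    (hv0 : v0 ∈ L) (hv1 : v1 ∈ L) (hv2 : v2 ∈ L) (hv3 : v3 ∈ L)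
    (hr0 : r0 ∈ R) (hr1 : r1 ∈ R) (hr2 : r2 ∈ R) (hr3 : r3 ∈ R)
    (a0 : G.Adj r0 v0) (a0' : G.Adj r0 v1) (a1 : G.Adj r1 v1) (a1' : G.Adj r1 v2)
    (a2 : G.Adj r2 v2) (a2' : G.Adj r2 v3) (a3 : G.Adj r3 v3) (a3' : G.Adj r3 v0)
    (hv01 : v0 ≠ v1) (hv02 : v0 ≠ v2) (hv03 : v0 ≠ v3) (hv12 : v1 ≠ v2)
    (hv13 : v1 ≠ v3) (hv23 : v2 ≠ v3)
    (hr01 : r0 ≠ r1) (hr02 : r0 ≠ r2) (hr03 : r0 ≠ r3) (hr12 : r1 ≠ r2)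
    (hr13 : r1 ≠ r3) (hr23 : r2 ≠ r3) :
    ∃ c : G.Walk v0 v0, c.IsCycle ∧ c.length = 8 ∧
      c.support = [v0, r0, v1, r1, v2, r2, v3, r3, v0] ∧
      c.edges = [s(v0,r0), s(r0,v1), s(v1,r1), s(r1,v2), s(v2,r2), s(r2,v3), s(v3,r3), s(r3,v0)] := by
  have key : ∀ r ∈ R, ∀ v ∈ L, r ≠ v := fun r hr v hv h =>
    Set.disjoint_left.mp hdisj hv (h ▸ hr)
  have k00 := key r0 hr0 v0 hv0; have k01 := key r0 hr0 v1 hv1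
  have k02 := key r0 hr0 v2 hv2; have k03 := key r0 hr0 v3 hv3
  have k10 := key r1 hr1 v0 hv0; have k11 := key r1 hr1 v1 hv1
  have k12 := key r1 hr1 v2 hv2; have k13 := key r1 hr1 v3 hv3
  have k20 := key r2 hr2 v0 hv0; have k21 := key r2 hr2 v1 hv1
  have k22 := key r2 hr2 v2 hv2; have k23 := key r2 hr2 v3 hv3
  have k30 := key r3 hr3 v0 hv0; have k31 := key r3 hr3 v1 hv1
  have k32 := key r3 hr3 v2 hv2; have k33 := key r3 hr3 v3 hv3
  have k00' := k00.symm; have k01' := k01.symm; have k02' := k02.symm; have k03' := k03.symm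
  have k10' := k10.symm; have k11' := k11.symm; have k12' := k12.symm; have k13' := k13.symm
  have k20' := k20.symm; have k21' := k21.symm; have k22' := k22.symm; have k23' := k23.symm
  have k30' := k30.symm; have k31' := k31.symm; have k32' := k32.symm; have k33' := k33.symm
  have hv10 := hv01.symm; have hv20 := hv02.symm; have hv30 := hv03.symm
  have hv21 := hv12.symm; have hv31 := hv13.symm; have hv32 := hv23.symm
  have hr10 := hr01.symm; have hr20 := hr02.symm; have hr30 := hr03.symm
  have hr21 := hr12.symm; have hr31 := hr13.symm; have hr32 := hr23.symm
  refine ⟨.cons a0.symm (.cons a0' (.cons a1.symm (.cons a1' (.cons a2.symm (.cons a2'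
    (.cons a3.symm (.cons a3' .nil))))))), ?_, rfl, rfl, rfl⟩
  rw [SimpleGraph.Walk.isCycle_def, SimpleGraph.Walk.isTrail_def]
  refine ⟨?_, by simp, ?_⟩
  · simp only [SimpleGraph.Walk.edges_cons, SimpleGraph.Walk.edges_nil, List.nodup_cons,
      List.mem_cons, List.not_mem_nil, or_false, List.nodup_nil, and_true, Sym2.eq_iff, not_or]
    simp_all
  · simp only [SimpleGraph.Walk.support_cons, SimpleGraph.Walk.support_nil, List.tail_cons,
      List.nodup_cons, List.mem_cons, List.not_mem_nil, or_false, List.nodup_nil, and_true, not_or]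
    simp_all

lemma stmt11_six_cycle {V : Type*} {G : SimpleGraph V} {L R : Set V} (hdisj : Disjoint L R)
    {v0 v1 v2 r0 r1 r2 : V}
    (hv0 : v0 ∈ L) (hv1 : v1 ∈ L) (hv2 : v2 ∈ L)
    (hr0 : r0 ∈ R) (hr1 : r1 ∈ R) (hr2 : r2 ∈ R)
    (a0 : G.Adj r0 v0) (a0' : G.Adj r0 v1) (a1 : G.Adj r1 v1) (a1' : G.Adj r1 v2)
    (a2 : G.Adj r2 v2) (a2' : G.Adj r2 v0)
    (hv01 : v0 ≠ v1) (hv02 : v0 ≠ v2) (hv12 : v1 ≠ v2)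
    (hr01 : r0 ≠ r1) (hr02 : r0 ≠ r2) (hr12 : r1 ≠ r2) :
    ∃ c : G.Walk v0 v0, c.IsCycle ∧ c.length = 6 := by
  have key : ∀ r ∈ R, ∀ v ∈ L, r ≠ v := fun r hr v hv h =>
    Set.disjoint_left.mp hdisj hv (h ▸ hr)
  have k00 := key r0 hr0 v0 hv0; have k01 := key r0 hr0 v1 hv1
  have k02 := key r0 hr0 v2 hv2
  have k10 := key r1 hr1 v0 hv0; have k11 := key r1 hr1 v1 hv1
  have k12 := key r1 hr1 v2 hv2
  have k20 := key r2 hr2 v0 hv0; have k21 := key r2 hr2 v1 hv1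
  have k22 := key r2 hr2 v2 hv2
  have k00' := k00.symm; have k01' := k01.symm; have k02' := k02.symm
  have k10' := k10.symm; have k11' := k11.symm; have k12' := k12.symm
  have k20' := k20.symm; have k21' := k21.symm; have k22' := k22.symm
  have hv10 := hv01.symm; have hv20 := hv02.symm; have hv21 := hv12.symm
  have hr10 := hr01.symm; have hr20 := hr02.symm; have hr21 := hr12.symm
  refine ⟨.cons a0.symm (.cons a0' (.cons a1.symm (.cons a1' (.cons a2.symm
    (.cons a2' .nil))))), ?_, rfl⟩
  rw [SimpleGraph.Walk.isCycle_def, SimpleGraph.Walk.isTrail_def]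
  refine ⟨?_, by simp, ?_⟩
  · simp only [SimpleGraph.Walk.edges_cons, SimpleGraph.Walk.edges_nil, List.nodup_cons,
      List.mem_cons, List.not_mem_nil, or_false, List.nodup_nil, and_true, Sym2.eq_iff, not_or]
    simp_all
  · simp only [SimpleGraph.Walk.support_cons, SimpleGraph.Walk.support_nil, List.tail_cons,
      List.nodup_cons, List.mem_cons, List.not_mem_nil, or_false, List.nodup_nil, and_true, not_or]
    simp_all

lemma stmt11_edge_notMem {V : Type*} {L R : Set V} (hdisj : Disjoint L R)
    {y r v0 v1 v2 v3 r0 r1 r2 r3 : V} (hy : y ∈ L)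
    (hr0 : r0 ∈ R) (hr1 : r1 ∈ R) (hr2 : r2 ∈ R) (hr3 : r3 ∈ R)
    (h0 : y ≠ v0) (h1 : y ≠ v1) (h2 : y ≠ v2) (h3 : y ≠ v3) :
    s(y, r) ∉ [s(v0,r0), s(r0,v1), s(v1,r1), s(r1,v2), s(v2,r2), s(r2,v3), s(v3,r3), s(r3,v0)] := by
  have key : ∀ q ∈ R, y ≠ q := fun q hq h => Set.disjoint_left.mp hdisj hy (h ▸ hq)
  have k0 := key r0 hr0; have k1 := key r1 hr1; have k2 := key r2 hr2; have k3 := key r3 hr3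
  intro hmem
  simp only [List.mem_cons, List.not_mem_nil, or_false, Sym2.eq_iff] at hmem
  tauto

lemma stmt11_master {V : Type*} {G : SimpleGraph V} {L R : Set V} (hdisj : Disjoint L R)
    (hcyc : ∀ (u v : V) (c₁ : G.Walk u u) (c₂ : G.Walk v v),
      c₁.IsCycle → c₂.IsCycle → c₁.length = 8 → c₂.length = 8 →
      {e : Sym2 V | e ∈ c₁.edges} ≠ {e : Sym2 V | e ∈ c₂.edges} →
      ∀ w ∈ L, w ∈ c₁.support → w ∉ c₂.support)
    {x0 x1 x2 x3 y1 y2 y3 s0 s1 s2 s3 t0 t1 t2 t3 : V}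
    (hx0 : x0 ∈ L) (hx1 : x1 ∈ L) (hx2 : x2 ∈ L) (hx3 : x3 ∈ L)
    (hy1 : y1 ∈ L) (hy2 : y2 ∈ L) (hy3 : y3 ∈ L)
    (hs0 : s0 ∈ R) (hs1 : s1 ∈ R) (hs2 : s2 ∈ R) (hs3 : s3 ∈ R)
    (ht0 : t0 ∈ R) (ht1 : t1 ∈ R) (ht2 : t2 ∈ R) (ht3 : t3 ∈ R)
    (as0 : G.Adj s0 x0) (as0' : G.Adj s0 x1) (as1 : G.Adj s1 x1) (as1' : G.Adj s1 x2)
    (as2 : G.Adj s2 x2) (as2' : G.Adj s2 x3) (as3 : G.Adj s3 x3) (as3' : G.Adj s3 x0)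
    (at0 : G.Adj t0 x0) (at0' : G.Adj t0 y1) (at1 : G.Adj t1 y1) (at1' : G.Adj t1 y2)
    (at2 : G.Adj t2 y2) (at2' : G.Adj t2 y3) (at3 : G.Adj t3 y3) (at3' : G.Adj t3 x0)
    (hx01 : x0 ≠ x1) (hx02 : x0 ≠ x2) (hx03 : x0 ≠ x3) (hx12 : x1 ≠ x2)
    (hx13 : x1 ≠ x3) (hx23 : x2 ≠ x3)
    (hy01 : x0 ≠ y1) (hy02 : x0 ≠ y2) (hy03 : x0 ≠ y3) (hy12 : y1 ≠ y2)
    (hy13 : y1 ≠ y3) (hy23 : y2 ≠ y3)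
    (hs01 : s0 ≠ s1) (hs02 : s0 ≠ s2) (hs03 : s0 ≠ s3) (hs12 : s1 ≠ s2)
    (hs13 : s1 ≠ s3) (hs23 : s2 ≠ s3)
    (ht01 : t0 ≠ t1) (ht02 : t0 ≠ t2) (ht03 : t0 ≠ t3) (ht12 : t1 ≠ t2)
    (ht13 : t1 ≠ t3) (ht23 : t2 ≠ t3)
    (hxy1 : x1 ≠ y1) (hxy2 : x1 ≠ y2) (hxy3 : x1 ≠ y3) : False := by
  obtain ⟨c1, hc1, l1, sup1, e1⟩ := stmt11_eight_cycle hdisj hx0 hx1 hx2 hx3 hs0 hs1 hs2 hs3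
    as0 as0' as1 as1' as2 as2' as3 as3' hx01 hx02 hx03 hx12 hx13 hx23 hs01 hs02 hs03 hs12 hs13 hs23
  obtain ⟨c2, hc2, l2, sup2, e2⟩ := stmt11_eight_cycle hdisj hx0 hy1 hy2 hy3 ht0 ht1 ht2 ht3
    at0 at0' at1 at1' at2 at2' at3 at3' hy01 hy02 hy03 hy12 hy13 hy23 ht01 ht02 ht03 ht12 ht13 ht23
  have hne : {e : Sym2 V | e ∈ c1.edges} ≠ {e : Sym2 V | e ∈ c2.edges} := by
    intro h
    have hm : s(x1, s1) ∈ c1.edges := by rw [e1]; simp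
    have hm2 : s(x1, s1) ∈ {e : Sym2 V | e ∈ c2.edges} := h ▸ hm
    rw [Set.mem_setOf_eq, e2] at hm2
    exact stmt11_edge_notMem hdisj hx1 ht0 ht1 ht2 ht3 hx01.symm hxy1 hxy2 hxy3 hm2
  have := hcyc x0 x0 c1 c2 hc1 hc2 l1 l2 hne x0 hx0 (by rw [sup1]; simp)
  exact this (by rw [sup2]; simp)

/-- In a Tanner graph of girth `8` in which no two 8-cycles with distinct edge sets share a
variable node, the VN graph of any `S ⊆ L` in which every check node has at most two
neighbors contains none of `C₃`, `θ(2,2,2)`, `θ(1,3,3)`, `D(4,4;0)` as a subgraph. -/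
theorem stmt11 {V : Type*} [Fintype V] (G : SimpleGraph V) (L R : Set V)
    (hdisj : Disjoint L R) (hcover : L ∪ R = Set.univ)
    (hbip : ∀ ⦃u v : V⦄, G.Adj u v → (u ∈ L ∧ v ∈ R) ∨ (u ∈ R ∧ v ∈ L))
    (hgirth : G.girth = 8)
    (hcyc : ∀ (u v : V) (c₁ : G.Walk u u) (c₂ : G.Walk v v),
      c₁.IsCycle → c₂.IsCycle → c₁.length = 8 → c₂.length = 8 →
      {e : Sym2 V | e ∈ c₁.edges} ≠ {e : Sym2 V | e ∈ c₂.edges} →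
      ∀ w ∈ L, w ∈ c₁.support → w ∉ c₂.support)
    (S : Set V) (hSL : S ⊆ L)
    (hcheck : ∀ r ∈ R, Nat.card {v : V | v ∈ S ∧ G.Adj r v} ≤ 2) :
    ¬ Contains triangleGraph (vnGraph G R S) ∧ ¬ Contains theta222 (vnGraph G R S) ∧
      ¬ Contains theta133 (vnGraph G R S) ∧ ¬ Contains dumbbell440 (vnGraph G R S) := by
  have hE : G.egirth = 8 := (ENat.toNat_eq_iff (by norm_num)).mp hgirth
  have h8 : ∀ (a : V) (w : G.Walk a a), w.IsCycle → 8 ≤ w.length := by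
    intro a w hw
    have := SimpleGraph.le_egirth.mp hE.ge a w hw
    exact_mod_cast this
  have three : ∀ r ∈ R, ∀ a b c : V, a ∈ S → b ∈ S → c ∈ S → a ≠ b → a ≠ c → b ≠ c →
      G.Adj r a → G.Adj r b → G.Adj r c → False := by
    intro r hr a b c ha hb hc hab hac hbc ga gb gc
    have hsub : ({a, b, c} : Set V) ⊆ {v : V | v ∈ S ∧ G.Adj r v} := by
      intro x hx
      simp only [Set.mem_insert_iff, Set.mem_singleton_iff] at hx
      rcases hx with rfl | rfl | rfl
      exacts [⟨ha, ga⟩, ⟨hb, gb⟩, ⟨hc, gc⟩]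
    have h3 : ({a, b, c} : Set V).ncard = 3 := by
      rw [Set.ncard_insert_of_notMem (by simp [hab, hac]) (Set.toFinite _),
        Set.ncard_pair hbc]
    have hle := Set.ncard_le_ncard hsub (Set.toFinite _)
    have h2 := hcheck r hr
    rw [Nat.card_coe_set_eq] at h2
    omega
  have chkne : ∀ r r' : V, r ∈ R → ∀ a b c : V, a ∈ S → b ∈ S → c ∈ S →
      a ≠ b → a ≠ c → b ≠ c → G.Adj r a → G.Adj r b → G.Adj r' c → r ≠ r' :=
    fun r r' hr a b c ha hb hc hab hac hbc g1 g2 g3 h =>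
      three r hr a b c ha hb hc hab hac hbc g1 g2 (h ▸ g3)
  have getr : ∀ u w : S, (vnGraph G R S).Adj u w →
      ∃ r, r ∈ R ∧ G.Adj r ↑u ∧ G.Adj r ↑w := by
    intro u w h
    rw [vnGraph, SimpleGraph.fromRel_adj] at h
    obtain ⟨-, ⟨r, hr, h1, h2⟩ | ⟨r, hr, h1, h2⟩⟩ := h
    · exact ⟨r, hr, h1, h2⟩
    · exact ⟨r, hr, h2, h1⟩
  refine ⟨?_, ?_, ?_, ?_⟩
  · -- triangle
    rintro ⟨f, hinj, hadj⟩
    have fne : ∀ i j : Fin 3, i ≠ j → (↑(f i) : V) ≠ ↑(f j) :=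
      fun i j hij h => hij (hinj (Subtype.ext h))
    obtain ⟨r01, hr01, a01, a01'⟩ := getr _ _ (hadj (show triangleGraph.Adj 0 1 by simp [triangleGraph]))
    obtain ⟨r12, hr12, a12, a12'⟩ := getr _ _ (hadj (show triangleGraph.Adj 1 2 by simp [triangleGraph]))
    obtain ⟨r20, hr20, a20, a20'⟩ := getr _ _ (hadj (show triangleGraph.Adj 2 0 by simp [triangleGraph]))
    have m0 := (f 0).2; have m1 := (f 1).2; have m2 := (f 2).2
    have d01 := fne 0 1 (by decide); have d02 := fne 0 2 (by decide)
    have d12 := fne 1 2 (by decide)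
    have hne01 : r01 ≠ r12 := chkne _ _ hr01 _ _ _ m0 m1 m2 d01 d02 d12 a01 a01' a12'
    have hne02 : r01 ≠ r20 := chkne _ _ hr01 _ _ _ m0 m1 m2 d01 d02 d12 a01 a01' a20
    have hne12 : r12 ≠ r20 := chkne _ _ hr12 _ _ _ m1 m2 m0 d12 d01.symm d02.symm a12 a12' a20'
    obtain ⟨c, hc, hl⟩ := stmt11_six_cycle hdisj (hSL m0) (hSL m1) (hSL m2)
      hr01 hr12 hr20 a01 a01' a12 a12' a20 a20' d01 d02 d12 hne01 hne02 hne12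
    have := h8 _ c hc
    omega
  · -- theta222
    rintro ⟨f, hinj, hadj⟩
    have fne : ∀ i j : Fin 2 ⊕ Fin 3, i ≠ j → (↑(f i) : V) ≠ ↑(f j) :=
      fun i j hij h => hij (hinj (Subtype.ext h))
    obtain ⟨rax, hrax, aax, aax'⟩ := getr _ _
      (hadj (show theta222.Adj (Sum.inl 0) (Sum.inr 0) by simp [theta222]))
    obtain ⟨ray, hray, aay, aay'⟩ := getr _ _
      (hadj (show theta222.Adj (Sum.inl 0) (Sum.inr 1) by simp [theta222]))
    obtain ⟨raz, hraz, aaz, aaz'⟩ := getr _ _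
      (hadj (show theta222.Adj (Sum.inl 0) (Sum.inr 2) by simp [theta222]))
    obtain ⟨rbx, hrbx, abx, abx'⟩ := getr _ _
      (hadj (show theta222.Adj (Sum.inl 1) (Sum.inr 0) by simp [theta222]))
    obtain ⟨rby, hrby, aby, aby'⟩ := getr _ _
      (hadj (show theta222.Adj (Sum.inl 1) (Sum.inr 1) by simp [theta222]))
    obtain ⟨rbz, hrbz, abz, abz'⟩ := getr _ _
      (hadj (show theta222.Adj (Sum.inl 1) (Sum.inr 2) by simp [theta222]))
    have ma := (f (Sum.inl 0)).2; have mb := (f (Sum.inl 1)).2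
    have mx := (f (Sum.inr 0)).2; have my := (f (Sum.inr 1)).2; have mz := (f (Sum.inr 2)).2
    have dab := fne (Sum.inl 0) (Sum.inl 1) (by decide)
    have dax := fne (Sum.inl 0) (Sum.inr 0) (by decide)
    have day := fne (Sum.inl 0) (Sum.inr 1) (by decide)
    have daz := fne (Sum.inl 0) (Sum.inr 2) (by decide)
    have dbx := fne (Sum.inl 1) (Sum.inr 0) (by decide)
    have dby := fne (Sum.inl 1) (Sum.inr 1) (by decide)
    have dbz := fne (Sum.inl 1) (Sum.inr 2) (by decide)
    have dxy := fne (Sum.inr 0) (Sum.inr 1) (by decide)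
    have dxz := fne (Sum.inr 0) (Sum.inr 2) (by decide)
    have dyz := fne (Sum.inr 1) (Sum.inr 2) (by decide)
    -- cycle1: (a, y, b, x) with checks (ray, rby, rbx, rax)
    -- cycle2: (a, x, b, z) with checks (rax, rbx, rbz, raz)
    exact stmt11_master hdisj hcyc (hSL ma) (hSL my) (hSL mb) (hSL mx)
      (hSL mx) (hSL mb) (hSL mz)
      hray hrby hrbx hrax hrax hrbx hrbz hraz
      aay aay' aby' aby abx abx' aax' aax
      aax aax' abx' abx abz abz' aaz' aaz
      day dab dax dby.symm dxy.symm dbx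
      dax dab daz dbx.symm dxz dbz
      (chkne _ _ hray _ _ _ ma my mb day dab dby.symm aay aay' aby)
      (chkne _ _ hray _ _ _ ma my mx day dax dxy.symm aay aay' abx')
      (chkne _ _ hray _ _ _ ma my mx day dax dxy.symm aay aay' aax')
      (chkne _ _ hrby _ _ _ mb my mx dby dbx dxy.symm aby aby' abx')
      (chkne _ _ hrby _ _ _ mb my mx dby dbx dxy.symm aby aby' aax')
      (chkne _ _ hrbx _ _ _ mb mx ma dbx dab.symm dax.symm abx abx' aax)
      (chkne _ _ hrax _ _ _ ma mx mb dax dab dbx.symm aax aax' abx)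
      (chkne _ _ hrax _ _ _ ma mx mb dax dab dbx.symm aax aax' abz)
      (chkne _ _ hrax _ _ _ ma mx mz dax daz dxz aax aax' aaz')
      (chkne _ _ hrbx _ _ _ mb mx mz dbx dbz dxz abx abx' abz')
      (chkne _ _ hrbx _ _ _ mb mx mz dbx dbz dxz abx abx' aaz')
      (chkne _ _ hrbz _ _ _ mb mz ma dbz dab.symm daz.symm abz abz' aaz)
      dxy.symm dby.symm dyz
  · -- theta133
    rintro ⟨f, hinj, hadj⟩
    have fne : ∀ i j : Fin 6, i ≠ j → (↑(f i) : V) ≠ ↑(f j) :=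
      fun i j hij h => hij (hinj (Subtype.ext h))
    obtain ⟨r01, hr01, a01, a01'⟩ := getr _ _ (hadj (show theta133.Adj 0 1 by simp [theta133]))
    obtain ⟨r12, hr12, a12, a12'⟩ := getr _ _ (hadj (show theta133.Adj 1 2 by simp [theta133]))
    obtain ⟨r23, hr23, a23, a23'⟩ := getr _ _ (hadj (show theta133.Adj 2 3 by simp [theta133]))
    obtain ⟨r34, hr34, a34, a34'⟩ := getr _ _ (hadj (show theta133.Adj 3 4 by simp [theta133]))
    obtain ⟨r45, hr45, a45, a45'⟩ := getr _ _ (hadj (show theta133.Adj 4 5 by simp [theta133]))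
    obtain ⟨r50, hr50, a50, a50'⟩ := getr _ _ (hadj (show theta133.Adj 5 0 by simp [theta133]))
    obtain ⟨r03, hr03, a03, a03'⟩ := getr _ _ (hadj (show theta133.Adj 0 3 by simp [theta133]))
    have m0 := (f 0).2; have m1 := (f 1).2; have m2 := (f 2).2
    have m3 := (f 3).2; have m4 := (f 4).2; have m5 := (f 5).2
    have d01 := fne 0 1 (by decide); have d02 := fne 0 2 (by decide)
    have d03 := fne 0 3 (by decide); have d04 := fne 0 4 (by decide)
    have d05 := fne 0 5 (by decide); have d12 := fne 1 2 (by decide)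
    have d13 := fne 1 3 (by decide); have d14 := fne 1 4 (by decide)
    have d15 := fne 1 5 (by decide); have d23 := fne 2 3 (by decide)
    have d34 := fne 3 4 (by decide); have d35 := fne 3 5 (by decide)
    have d45 := fne 4 5 (by decide)
    -- cycle1: (x0,x1,x2,x3) checks (r01,r12,r23,r03)
    -- cycle2: (x0,x3,x4,x5) checks (r03,r34,r45,r50)
    exact stmt11_master hdisj hcyc (hSL m0) (hSL m1) (hSL m2) (hSL m3)
      (hSL m3) (hSL m4) (hSL m5)
      hr01 hr12 hr23 hr03 hr03 hr34 hr45 hr50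
      a01 a01' a12 a12' a23 a23' a03' a03
      a03 a03' a34 a34' a45 a45' a50 a50'
      d01 d02 d03 d12 d13 d23
      d03 d04 d05 d34 d35 d45
      (chkne _ _ hr01 _ _ _ m0 m1 m2 d01 d02 d12 a01 a01' a12')
      (chkne _ _ hr01 _ _ _ m0 m1 m2 d01 d02 d12 a01 a01' a23)
      (chkne _ _ hr01 _ _ _ m0 m1 m3 d01 d03 d13 a01 a01' a03')
      (chkne _ _ hr12 _ _ _ m1 m2 m3 d12 d13 d23 a12 a12' a23')
      (chkne _ _ hr12 _ _ _ m1 m2 m0 d12 d01.symm d02.symm a12 a12' a03)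
      (chkne _ _ hr23 _ _ _ m2 m3 m0 d23 d02.symm d03.symm a23 a23' a03)
      (chkne _ _ hr03 _ _ _ m0 m3 m4 d03 d04 d34 a03 a03' a34')
      (chkne _ _ hr03 _ _ _ m0 m3 m4 d03 d04 d34 a03 a03' a45)
      (chkne _ _ hr03 _ _ _ m0 m3 m5 d03 d05 d35 a03 a03' a50)
      (chkne _ _ hr34 _ _ _ m3 m4 m5 d34 d35 d45 a34 a34' a45')
      (chkne _ _ hr34 _ _ _ m3 m4 m5 d34 d35 d45 a34 a34' a50)
      (chkne _ _ hr45 _ _ _ m4 m5 m0 d45 d04.symm d05.symm a45 a45' a50')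
      d13 d14 d15
  · -- dumbbell
    rintro ⟨f, hinj, hadj⟩
    have fne : ∀ i j : Fin 7, i ≠ j → (↑(f i) : V) ≠ ↑(f j) :=
      fun i j hij h => hij (hinj (Subtype.ext h))
    obtain ⟨r01, hr01, a01, a01'⟩ := getr _ _ (hadj (show dumbbell440.Adj 0 1 by simp [dumbbell440]))
    obtain ⟨r12, hr12, a12, a12'⟩ := getr _ _ (hadj (show dumbbell440.Adj 1 2 by simp [dumbbell440]))
    obtain ⟨r23, hr23, a23, a23'⟩ := getr _ _ (hadj (show dumbbell440.Adj 2 3 by simp [dumbbell440]))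
    obtain ⟨r30, hr30, a30, a30'⟩ := getr _ _ (hadj (show dumbbell440.Adj 3 0 by simp [dumbbell440]))
    obtain ⟨r04, hr04, a04, a04'⟩ := getr _ _ (hadj (show dumbbell440.Adj 0 4 by simp [dumbbell440]))
    obtain ⟨r45, hr45, a45, a45'⟩ := getr _ _ (hadj (show dumbbell440.Adj 4 5 by simp [dumbbell440]))
    obtain ⟨r56, hr56, a56, a56'⟩ := getr _ _ (hadj (show dumbbell440.Adj 5 6 by simp [dumbbell440]))
    obtain ⟨r60, hr60, a60, a60'⟩ := getr _ _ (hadj (show dumbbell440.Adj 6 0 by simp [dumbbell440]))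
    have m0 := (f 0).2; have m1 := (f 1).2; have m2 := (f 2).2; have m3 := (f 3).2
    have m4 := (f 4).2; have m5 := (f 5).2; have m6 := (f 6).2
    have d01 := fne 0 1 (by decide); have d02 := fne 0 2 (by decide)
    have d03 := fne 0 3 (by decide); have d04 := fne 0 4 (by decide)
    have d05 := fne 0 5 (by decide); have d06 := fne 0 6 (by decide)
    have d12 := fne 1 2 (by decide); have d13 := fne 1 3 (by decide)
    have d14 := fne 1 4 (by decide); have d15 := fne 1 5 (by decide)
    have d16 := fne 1 6 (by decide); have d23 := fne 2 3 (by decide)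
    have d45 := fne 4 5 (by decide); have d46 := fne 4 6 (by decide)
    have d56 := fne 5 6 (by decide)
    -- cycle1: (x0,x1,x2,x3) checks (r01,r12,r23,r30)
    -- cycle2: (x0,x4,x5,x6) checks (r04,r45,r56,r60)
    exact stmt11_master hdisj hcyc (hSL m0) (hSL m1) (hSL m2) (hSL m3)
      (hSL m4) (hSL m5) (hSL m6)
      hr01 hr12 hr23 hr30 hr04 hr45 hr56 hr60
      a01 a01' a12 a12' a23 a23' a30 a30'
      a04 a04' a45 a45' a56 a56' a60 a60'
      d01 d02 d03 d12 d13 d23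
      d04 d05 d06 d45 d46 d56
      (chkne _ _ hr01 _ _ _ m0 m1 m2 d01 d02 d12 a01 a01' a12')
      (chkne _ _ hr01 _ _ _ m0 m1 m2 d01 d02 d12 a01 a01' a23)
      (chkne _ _ hr01 _ _ _ m0 m1 m3 d01 d03 d13 a01 a01' a30)
      (chkne _ _ hr12 _ _ _ m1 m2 m3 d12 d13 d23 a12 a12' a23')
      (chkne _ _ hr12 _ _ _ m1 m2 m0 d12 d01.symm d02.symm a12 a12' a30')
      (chkne _ _ hr23 _ _ _ m2 m3 m0 d23 d02.symm d03.symm a23 a23' a30')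
      (chkne _ _ hr04 _ _ _ m0 m4 m5 d04 d05 d45 a04 a04' a45')
      (chkne _ _ hr04 _ _ _ m0 m4 m5 d04 d05 d45 a04 a04' a56)
      (chkne _ _ hr04 _ _ _ m0 m4 m6 d04 d06 d46 a04 a04' a60)
      (chkne _ _ hr45 _ _ _ m4 m5 m6 d45 d46 d56 a45 a45' a56')
      (chkne _ _ hr45 _ _ _ m4 m5 m6 d45 d46 d56 a45 a45' a60)
      (chkne _ _ hr56 _ _ _ m5 m6 m0 d56 d05.symm d06.symm a56 a56' a60')
      d14 d15 d16
end

section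
/- Let G be a finite bipartite simple graph with parts L and R (every edge joins a vertex of L to a vertex of R) whose girth equals 8, in which every vertex of L has degree 3, and suppose that any two cycles of length 8 in G with distinct edge sets have no common vertex belonging to L. Let S ⊆ L with |S| = a be nonempty and such that every vertex of R has at most 2 neighbors in S, let b be the number of vertices of R having an odd number of neighbors in S, and suppose b < a. Then: if b = 0 then a ≥ 10; if b = 1 then a ≥ 11; if b = 2 then a ≥ 10; and if b = 3 then a ≥ 7. -/
/-!
Contract every check node with two neighbours in `S` to an edge between them: this gives the
normal graph `H` on `S`. Since `G` has girth 8, `H` is triangle-free, every `v ∈ S` satisfies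
`deg_H v = 3 - (number of unsatisfied checks at v)`, so `b = ∑ (3 - deg_H v)`, and 4-cycles of `H`
come from 8-cycles of `G`, so they are vertex-disjoint.

As `b < a`, some `v` has `deg_H v = 3`. The ball of radius two around `v` then has at least
`∑_{n ∼ v} deg_H n ≥ 9 - b` vertices, since the sets `N(n) \ {v}` overlap in at most one vertex
(an overlap is a 4-cycle through `v`). So `a + b ≥ 9`, and the handshake lemma gives
`a ≡ b (mod 2)`, which settles `b = 0` and `b = 3`. For `b = 2` at most six vertices lie within
distance one of a deficient vertex, so some vertex has degree 3 together with all its neighbours,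
whence `a ≥ 9`. For `b = 1` and `a = 9` the same count puts every vertex within distance two of
the unique vertex of degree 2, whose ball of radius two has at most `1 + 2 · 3 = 7` vertices.
-/

open Finset

theorem Finset.card_add_card_add_card_le {α : Type*} [DecidableEq α] (A B C : Finset α) :
    #A + #B + #C ≤ #(A ∪ B ∪ C) + (#(A ∩ B) + #(A ∩ C) + #(B ∩ C)) := by
  have hAB := card_union_add_card_inter A B
  have hABC := card_union_add_card_inter (A ∪ B) C
  have : #((A ∪ B) ∩ C) ≤ #(A ∩ C) + #(B ∩ C) := by
    rw [union_inter_distrib_right]; exact card_union_le _ _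
  omega

namespace SimpleGraph

variable {V : Type*}

/-- Distinct 4-cycles of `H` are vertex-disjoint, stated as: two 4-cycles `v x w y` and
`v z w' t` through the same vertex coincide. -/
def DisjointSquares (H : SimpleGraph V) : Prop :=
  ∀ ⦃v x w y z w' t : V⦄, H.Adj v x → H.Adj x w → H.Adj w y → H.Adj y v → x ≠ y → w ≠ v →
    H.Adj v z → H.Adj z w' → H.Adj w' t → H.Adj t v → z ≠ t → w' ≠ v →
    w = w' ∧ s(x, y) = s(z, t)

section Degrees

variable [Fintype V] {H : SimpleGraph V} [DecidableRel H.Adj] {S : Finset V} {v : V}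

theorem sum_degree_neighbors_eq_nine (hv : H.degree v = 3)
    (hnbrs : ∀ n, H.Adj v n → H.degree n = 3) : ∑ n ∈ H.neighborFinset v, H.degree n = 9 := by
  rw [sum_congr rfl fun n hn ↦ hnbrs n ((mem_neighborFinset _ _ _).1 hn), sum_const,
    card_neighborFinset_eq_degree, hv, smul_eq_mul]

theorem sum_degree_add_sum_sub_degree (hdeg : ∀ v ∈ S, H.degree v ≤ 3) :
    ∑ v ∈ S, H.degree v + ∑ v ∈ S, (3 - H.degree v) = 3 * #S := by
  rw [← sum_add_distrib, sum_congr rfl fun v hv ↦ Nat.add_sub_of_le (hdeg v hv), sum_const,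
    smul_eq_mul, mul_comm]

theorem even_sum_degree (hS : ∀ ⦃x y⦄, H.Adj x y → x ∈ S) : Even (∑ v ∈ S, H.degree v) := by
  rw [sum_subset (subset_univ S) fun v _ hv ↦ ?_, sum_degrees_eq_twice_card_edges]
  · exact even_two_mul _
  · rw [← card_neighborFinset_eq_degree, card_eq_zero, eq_empty_iff_forall_notMem]
    exact fun w hw ↦ hv (hS ((mem_neighborFinset _ _ _).1 hw))

theorem exists_degree_eq_three (hdeg : ∀ v ∈ S, H.degree v ≤ 3)
    (h : ∑ v ∈ S, (3 - H.degree v) < #S) : ∃ v ∈ S, H.degree v = 3 := by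
  by_contra! hne
  have : #S ≤ ∑ v ∈ S, (3 - H.degree v) := by
    rw [card_eq_sum_ones]
    exact sum_le_sum fun v hv ↦ by have := hdeg v hv; have := hne v hv; omega
  omega

theorem nine_le_sum_degree_neighbors_add (hS : ∀ ⦃x y⦄, H.Adj x y → x ∈ S)
    (hv : H.degree v = 3) :
    9 ≤ ∑ n ∈ H.neighborFinset v, H.degree n + ∑ u ∈ S, (3 - H.degree u) := by
  have hsub : H.neighborFinset v ⊆ S := fun n hn ↦ hS ((mem_neighborFinset _ _ _).1 hn).symm
  calc 9 = ∑ n ∈ H.neighborFinset v, 3 := by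
        rw [sum_const, card_neighborFinset_eq_degree, hv, smul_eq_mul]
    _ ≤ ∑ n ∈ H.neighborFinset v, (H.degree n + (3 - H.degree n)) :=
        sum_le_sum fun n _ ↦ by omega
    _ ≤ _ := by rw [sum_add_distrib]; gcongr

variable [DecidableEq V]

theorem exists_degree_eq_three_forall_adj (hS : ∀ ⦃x y⦄, H.Adj x y → x ∈ S)
    (hdeg : ∀ v ∈ S, H.degree v ≤ 3) (h : 3 * ∑ v ∈ S, (3 - H.degree v) < #S) :
    ∃ v ∈ S, H.degree v = 3 ∧ ∀ n, H.Adj v n → H.degree n = 3 := by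
  set D := {u ∈ S | H.degree u < 3}
  -- a deficient vertex `u` together with its neighbours has `1 + deg u ≤ 3 (3 - deg u)` vertices
  have hcard : #(D.biUnion fun u ↦ insert u (H.neighborFinset u)) < #S := by
    calc _ ≤ ∑ u ∈ D, #(insert u (H.neighborFinset u)) := card_biUnion_le
      _ ≤ ∑ u ∈ D, 3 * (3 - H.degree u) := sum_le_sum fun u hu ↦ by
          have := (mem_filter.1 hu).2
          have := card_insert_le u (H.neighborFinset u)
          rw [card_neighborFinset_eq_degree] at this
          omega
      _ ≤ ∑ u ∈ S, 3 * (3 - H.degree u) := sum_le_sum_of_subset (filter_subset _ _)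
      _ < #S := by rwa [← mul_sum]
  obtain ⟨v, hvS, hvD⟩ := exists_mem_notMem_of_card_lt_card hcard
  simp only [mem_biUnion, mem_insert, mem_neighborFinset, not_exists, not_and, D, mem_filter,
    not_or] at hvD
  have hfull {u} (hu : u ∈ S) (huv : u = v ∨ H.Adj u v) : H.degree u = 3 := by
    have := hdeg u hu
    by_contra h
    have := hvD u ⟨hu, by omega⟩
    tauto
  exact ⟨v, hvS, hfull hvS (.inl rfl), fun n hn ↦ hfull (hS hn.symm) (.inr hn.symm)⟩

end Degrees

section Ball

variable [Fintype V] [DecidableEq V] {H : SimpleGraph V} [DecidableRel H.Adj] {S : Finset V}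
  {u v w w' x y z t : V}

variable (H) in
def ball2 (v : V) : Finset V :=
  insert v (H.neighborFinset v ∪ (H.neighborFinset v).biUnion fun n ↦ (H.neighborFinset n).erase v)

theorem mem_ball2 : u ∈ H.ball2 v ↔ u = v ∨ H.Adj v u ∨ ∃ n, H.Adj v n ∧ H.Adj n u := by
  simp only [ball2, mem_insert, mem_union, mem_biUnion, mem_erase, mem_neighborFinset]
  grind

theorem mem_ball2_comm : u ∈ H.ball2 v ↔ v ∈ H.ball2 u := by
  simp only [mem_ball2, eq_comm (a := u), H.adj_comm u v]
  grind [H.adj_comm]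

theorem ball2_subset (hS : ∀ ⦃x y⦄, H.Adj x y → x ∈ S) (hv : v ∈ S) : H.ball2 v ⊆ S := by
  intro u hu
  rcases mem_ball2.1 hu with rfl | h | ⟨n, -, h⟩
  exacts [hv, hS h.symm, hS h.symm]

theorem card_ball2_le : #(H.ball2 v) ≤ 1 + ∑ n ∈ H.neighborFinset v, H.degree n := by
  have hA : ∑ n ∈ H.neighborFinset v, #((H.neighborFinset n).erase v) + H.degree v =
      ∑ n ∈ H.neighborFinset v, H.degree n := by
    rw [← card_neighborFinset_eq_degree, card_eq_sum_ones, ← sum_add_distrib]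
    refine sum_congr rfl fun n hn ↦ ?_
    rw [card_erase_of_mem (by simpa [adj_comm] using hn), card_neighborFinset_eq_degree]
    have : 0 < H.degree n := H.degree_pos_iff_exists_adj n |>.2 ⟨v, by simpa [adj_comm] using hn⟩
    omega
  calc #(H.ball2 v)
      ≤ 1 + (H.degree v + ∑ n ∈ H.neighborFinset v, #((H.neighborFinset n).erase v)) := by
        refine (card_insert_le _ _).trans ?_
        rw [add_comm 1, ← card_neighborFinset_eq_degree]
        gcongr
        exact (card_union_le _ _).trans (by gcongr; exact card_biUnion_le)
    _ = 1 + ∑ n ∈ H.neighborFinset v, H.degree n := by omega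

theorem card_ball2_of_cliqueFree (htri : H.CliqueFree 3) :
    #(H.ball2 v) = 1 + H.degree v +
      #((H.neighborFinset v).biUnion fun n ↦ (H.neighborFinset n).erase v) := by
  have hindep := isIndepSet_neighborSet_of_triangleFree H htri v
  have hdisj : Disjoint (H.neighborFinset v)
      ((H.neighborFinset v).biUnion fun n ↦ (H.neighborFinset n).erase v) := by
    refine Finset.disjoint_left.2 fun w hwN hwA ↦ ?_
    simp only [mem_biUnion, mem_erase, mem_neighborFinset] at hwN hwA
    obtain ⟨n, hn, -, hnw⟩ := hwA
    exact hindep hn hwN hnw.ne hnw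
  rw [ball2, card_insert_of_notMem (by simp), card_union_of_disjoint hdisj,
    card_neighborFinset_eq_degree]
  omega

theorem DisjointSquares.eq_of_mem_inter (hsq : H.DisjointSquares) (hx : H.Adj v x)
    (hy : H.Adj v y) (hz : H.Adj v z) (ht : H.Adj v t) (hxy : x ≠ y) (hzt : z ≠ t)
    (hw : w ∈ (H.neighborFinset x).erase v ∩ (H.neighborFinset y).erase v)
    (hw' : w' ∈ (H.neighborFinset z).erase v ∩ (H.neighborFinset t).erase v) :
    w = w' ∧ s(x, y) = s(z, t) := by
  simp only [mem_inter, mem_erase, mem_neighborFinset] at hw hw'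
  exact hsq hx hw.1.2 hw.2.2.symm hy.symm hxy hw.1.1 hz hw'.1.2 hw'.2.2.symm ht.symm hzt hw'.1.1

theorem sum_degree_le_card_ball2 (htri : H.CliqueFree 3) (hsq : H.DisjointSquares)
    (hv : H.degree v = 3) : ∑ n ∈ H.neighborFinset v, H.degree n ≤ #(H.ball2 v) := by
  obtain ⟨n₁, n₂, n₃, h₁₂, h₁₃, h₂₃, hN⟩ :=
    card_eq_three.1 (show #(H.neighborFinset v) = 3 from hv)
  have hadj {n} (hn : n ∈ ({n₁, n₂, n₃} : Finset V)) : H.Adj v n :=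
    (mem_neighborFinset _ _ _).1 (hN ▸ hn)
  have h₁ := hadj (n := n₁) (by simp)
  have h₂ := hadj (n := n₂) (by simp)
  have h₃ := hadj (n := n₃) (by simp)
  rw [card_ball2_of_cliqueFree htri, hN, biUnion_insert, biUnion_insert, singleton_biUnion,
    ← union_assoc, sum_insert (by simp [h₁₂, h₁₃]), sum_insert (by simp [h₂₃]), sum_singleton, hv]
  set A : V → Finset V := fun n ↦ (H.neighborFinset n).erase v
  have hpair {x y} (hx : H.Adj v x) (hy : H.Adj v y) (hxy : x ≠ y) : #(A x ∩ A y) ≤ 1 :=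
    card_le_one.2 fun w hw w' hw' ↦ (hsq.eq_of_mem_inter hx hy hx hy hxy hxy hw hw').1
  -- an overlap of two sets `A n` is a 4-cycle through `v`, so there is at most one
  have hexcl {x y z t} (hx : H.Adj v x) (hy : H.Adj v y) (hz : H.Adj v z) (ht : H.Adj v t)
      (hxy : x ≠ y) (hzt : z ≠ t) (hne : s(x, y) ≠ s(z, t)) :
      #(A x ∩ A y) = 0 ∨ #(A z ∩ A t) = 0 := by
    by_contra! h
    obtain ⟨w, hw⟩ := card_pos.1 (Nat.pos_of_ne_zero h.1)
    obtain ⟨w', hw'⟩ := card_pos.1 (Nat.pos_of_ne_zero h.2)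
    exact hne (hsq.eq_of_mem_inter hx hy hz ht hxy hzt hw hw').2
  have := hpair h₁ h₂ h₁₂
  have := hpair h₁ h₃ h₁₃
  have := hpair h₂ h₃ h₂₃
  have := hexcl h₁ h₂ h₁ h₃ h₁₂ h₁₃ (by grind [Sym2.eq_iff])
  have := hexcl h₁ h₂ h₂ h₃ h₁₂ h₂₃ (by grind [Sym2.eq_iff])
  have := hexcl h₁ h₃ h₂ h₃ h₁₃ h₂₃ (by grind [Sym2.eq_iff])
  have hcardA {n} (hn : H.Adj v n) : #(A n) + 1 = H.degree n := by
    rw [card_erase_add_one ((mem_neighborFinset _ _ _).2 hn.symm), card_neighborFinset_eq_degree]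
  have := card_add_card_add_card_le (A n₁) (A n₂) (A n₃)
  rw [← hcardA h₁, ← hcardA h₂, ← hcardA h₃]
  change _ ≤ _ + #(A n₁ ∪ A n₂ ∪ A n₃)
  omega

theorem sum_degree_neighbors_le_card (hS : ∀ ⦃x y⦄, H.Adj x y → x ∈ S) (htri : H.CliqueFree 3)
    (hsq : H.DisjointSquares) (hv : v ∈ S) (hv3 : H.degree v = 3) :
    ∑ n ∈ H.neighborFinset v, H.degree n ≤ #S :=
  (sum_degree_le_card_ball2 htri hsq hv3).trans (card_le_card (ball2_subset hS hv))

theorem card_ne_nine_of_sum_sub_degree_eq_one (hS : ∀ ⦃x y⦄, H.Adj x y → x ∈ S)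
    (htri : H.CliqueFree 3) (hsq : H.DisjointSquares) (hdeg : ∀ v ∈ S, H.degree v ≤ 3)
    (hb : ∑ v ∈ S, (3 - H.degree v) = 1) : #S ≠ 9 := by
  intro ha
  obtain ⟨u, hu, hu2⟩ := exists_ne_zero_of_sum_ne_zero (hb ▸ one_ne_zero)
  have hrest : ∀ w ∈ S, w ≠ u → H.degree w = 3 := by
    have := add_sum_erase S (fun v ↦ 3 - H.degree v) hu
    intro w hw hwu
    have := sum_eq_zero_iff.1 (show ∑ v ∈ S.erase u, (3 - H.degree v) = 0 by omega) w
      (mem_erase.2 ⟨hwu, hw⟩)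
    have := hdeg w hw
    omega
  -- every vertex at distance at least two from `u` sees all of `S` within distance two
  have hcover : S ⊆ H.ball2 u := by
    intro v hv
    by_cases hvu : v = u ∨ H.Adj u v
    · exact mem_ball2.2 (by tauto)
    obtain ⟨hvu, huv⟩ := not_or.1 hvu
    have hv3 := hrest v hv hvu
    have h9 := sum_degree_neighbors_eq_nine hv3 fun n hn ↦
      hrest n (hS hn.symm) (by rintro rfl; exact huv hn.symm)
    have hball : H.ball2 v = S := eq_of_subset_of_card_le (ball2_subset hS hv)
      (by have := sum_degree_le_card_ball2 htri hsq hv3; omega)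
    exact mem_ball2_comm.1 (hball ▸ hu)
  have hnbrs : ∑ n ∈ H.neighborFinset u, H.degree n ≤ 6 :=
    calc _ ≤ ∑ n ∈ H.neighborFinset u, 3 :=
          sum_le_sum fun n hn ↦ hdeg n (hS ((mem_neighborFinset _ _ _).1 hn).symm)
      _ ≤ 6 := by rw [sum_const, card_neighborFinset_eq_degree, smul_eq_mul]; omega
  have := card_le_card hcover
  have := card_ball2_le (H := H) (v := u)
  omega

theorem card_lower_bounds (hS : ∀ ⦃x y⦄, H.Adj x y → x ∈ S) (htri : H.CliqueFree 3)
    (hsq : H.DisjointSquares) (hdeg : ∀ v ∈ S, H.degree v ≤ 3) {b : ℕ}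
    (hb : ∑ v ∈ S, (3 - H.degree v) = b) (hba : b < #S) :
    (b = 0 → 10 ≤ #S) ∧ (b = 1 → 11 ≤ #S) ∧ (b = 2 → 10 ≤ #S) ∧ (b = 3 → 7 ≤ #S) := by
  have hsum := sum_degree_add_sum_sub_degree hdeg
  obtain ⟨k, hk⟩ := even_sum_degree hS
  obtain ⟨v, hv, hv3⟩ := exists_degree_eq_three hdeg (hb ▸ hba)
  have h9 : 9 ≤ #S + b := by
    have := nine_le_sum_degree_neighbors_add hS hv3
    have := sum_degree_neighbors_le_card hS htri hsq hv hv3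
    omega
  have hb1 : b = 1 → #S ≠ 9 := fun h ↦
    card_ne_nine_of_sum_sub_degree_eq_one hS htri hsq hdeg (hb.trans h)
  have hb2 : b = 2 → 9 ≤ #S := by
    rintro rfl
    obtain ⟨w, hw, hw3, hnbrs⟩ := exists_degree_eq_three_forall_adj hS hdeg (by omega)
    exact sum_degree_neighbors_eq_nine hw3 hnbrs ▸ sum_degree_neighbors_le_card hS htri hsq hw hw3
  omega

end Ball

section Tanner

variable {G : SimpleGraph V}


theorem eq_of_adj_of_adj_of_four_lt_egirth (hg : 4 < G.egirth) {v w r r' : V} (hvw : v ≠ w)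
    (hvr : G.Adj v r) (hrw : G.Adj r w) (hvr' : G.Adj v r') (hr'w : G.Adj r' w) : r = r' := by
  by_contra hrr
  have hc : (Walk.cons hvr (.cons hrw (.cons hr'w.symm (.cons hvr'.symm .nil)))).IsCycle := by
    have := hvr.ne; have := hrw.ne; have := hvr'.ne; have := hr'w.ne
    simp only [Walk.cons_isCycle_iff, Walk.cons_isPath_iff, Walk.isPath_iff_nil, Walk.edges_cons,
      Walk.support_cons, Walk.support_nil, Walk.edges_nil, List.mem_cons, List.not_mem_nil,
      Sym2.eq_iff, not_or, not_and, Walk.nil_nil]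
    and_intros <;> grind
  have := (egirth_le_length hc).trans_lt hg
  simp at this

/-- The normal graph of a trapping set `S`: its edges are the check nodes with two neighbours
in `S`. -/
def normalGraph (G : SimpleGraph V) (S : Finset V) : SimpleGraph V where
  Adj x y := x ≠ y ∧ x ∈ S ∧ y ∈ S ∧ ∃ r, G.Adj x r ∧ G.Adj r y
  symm := ⟨fun _ _ ⟨hxy, hx, hy, r, hxr, hry⟩ ↦ ⟨hxy.symm, hy, hx, r, hry.symm, hxr.symm⟩⟩
  loopless := ⟨fun _ h ↦ h.1 rfl⟩

def IsElementary (G : SimpleGraph V) (S : Finset V) : Prop :=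
  ∀ ⦃r x y z⦄, x ∈ S → y ∈ S → z ∈ S → G.Adj r x → G.Adj r y → G.Adj r z →
    x = y ∨ x = z ∨ y = z

variable {S : Finset V} {r r' v w x y z : V}

theorem normalGraph_adj :
    (G.normalGraph S).Adj x y ↔ x ≠ y ∧ x ∈ S ∧ y ∈ S ∧ ∃ r, G.Adj x r ∧ G.Adj r y :=
  Iff.rfl

theorem IsElementary.ne (hS : G.IsElementary S) (hx : x ∈ S) (hy : y ∈ S) (hz : z ∈ S)
    (hxy : x ≠ y) (hxz : x ≠ z) (hyz : y ≠ z) (hrx : G.Adj r x) (hry : G.Adj r y)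
    (hr'z : G.Adj r' z) : r ≠ r' := by
  rintro rfl
  grind [hS hx hy hz hrx hry hr'z]

theorem isElementary_of_card_filter_le_two [DecidableRel G.Adj]
    (h : ∀ r, ∀ x ∈ S, G.Adj r x → #{y ∈ S | G.Adj r y} ≤ 2) : G.IsElementary S := by
  intro r x y z hx hy hz hrx hry hrz
  by_contra! hne
  have := h r x hx hrx
  have : 2 < #{y ∈ S | G.Adj r y} :=
    two_lt_card_iff.2 ⟨x, y, z, by simp [*], by simp [*], by simp [*], hne⟩
  omega

theorem IsIndepSet.notMem_of_adj (hind : G.IsIndepSet S) (hx : x ∈ S) (hxr : G.Adj x r) :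
    r ∉ S :=
  fun hr ↦ hind hx hr hxr.ne hxr

theorem cliqueFree_three_normalGraph (hg : 6 < G.egirth) (hind : G.IsIndepSet S)
    (hS : G.IsElementary S) : (G.normalGraph S).CliqueFree 3 := by
  classical
  rintro _ ht
  obtain ⟨x, y, z, hxy, hxz, hyz, -⟩ := is3Clique_iff.1 ht
  obtain ⟨hxy, hx, hy, r₁, hxr₁, hr₁y⟩ := normalGraph_adj.1 hxy
  obtain ⟨hxz, -, hz, r₃, hxr₃, hr₃z⟩ := normalGraph_adj.1 hxz
  obtain ⟨hyz, -, -, r₂, hyr₂, hr₂z⟩ := normalGraph_adj.1 hyz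
  have := hS.ne hx hy hz hxy hxz hyz hxr₁.symm hr₁y hr₂z
  have := hS.ne hx hy hz hxy hxz hyz hxr₁.symm hr₁y hr₃z
  have := hS.ne hy hz hx hyz hxy.symm hxz.symm hyr₂.symm hr₂z hxr₃.symm
  have := hind.notMem_of_adj hx hxr₁
  have := hind.notMem_of_adj hy hyr₂
  have := hind.notMem_of_adj hz hr₃z.symm
  have hc : (Walk.cons hxr₁ (.cons hr₁y (.cons hyr₂ (.cons hr₂z (.cons hr₃z.symm
      (.cons hxr₃.symm .nil)))))).IsCycle := by
    simp only [Walk.cons_isCycle_iff, Walk.cons_isPath_iff, Walk.isPath_iff_nil, Walk.edges_cons,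
      Walk.support_cons, Walk.support_nil, Walk.edges_nil, List.mem_cons, List.not_mem_nil,
      Sym2.eq_iff, not_or, not_and, Walk.nil_nil]
    and_intros <;> grind
  have := (egirth_le_length hc).trans_lt hg
  simp at this

theorem exists_isCycle_length_eight (hind : G.IsIndepSet S) (hS : G.IsElementary S)
    (hvx : (G.normalGraph S).Adj v x) (hxw : (G.normalGraph S).Adj x w)
    (hwy : (G.normalGraph S).Adj w y) (hyv : (G.normalGraph S).Adj y v) (hxy : x ≠ y)
    (hwv : w ≠ v) :
    ∃ c : G.Walk v v, c.IsCycle ∧ c.length = 8 ∧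
      ∀ u ∈ S, u ∈ c.support ↔ u = v ∨ u = x ∨ u = w ∨ u = y := by
  obtain ⟨hvx, hv, hx, r₁, hvr₁, hr₁x⟩ := normalGraph_adj.1 hvx
  obtain ⟨hxw, -, hw, r₂, hxr₂, hr₂w⟩ := normalGraph_adj.1 hxw
  obtain ⟨hwy, -, hy, r₃, hwr₃, hr₃y⟩ := normalGraph_adj.1 hwy
  obtain ⟨hyv, -, -, r₄, hyr₄, hr₄v⟩ := normalGraph_adj.1 hyv
  have := hS.ne hv hx hw hvx hwv.symm hxw hvr₁.symm hr₁x hr₂w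
  have := hS.ne hv hx hw hvx hwv.symm hxw hvr₁.symm hr₁x hwr₃.symm
  have := hS.ne hv hx hy hvx hyv.symm hxy hvr₁.symm hr₁x hyr₄.symm
  have := hS.ne hx hw hy hxw hxy hwy hxr₂.symm hr₂w hr₃y
  have := hS.ne hx hw hv hxw hvx.symm hwv hxr₂.symm hr₂w hr₄v
  have := hS.ne hw hy hv hwy hwv hyv hwr₃.symm hr₃y hr₄v
  have := hind.notMem_of_adj hv hvr₁
  have := hind.notMem_of_adj hx hxr₂
  have := hind.notMem_of_adj hw hwr₃
  have := hind.notMem_of_adj hy hyr₄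
  refine ⟨.cons hvr₁ (.cons hr₁x (.cons hxr₂ (.cons hr₂w (.cons hwr₃ (.cons hr₃y (.cons hyr₄
    (.cons hr₄v .nil))))))), ?_, rfl, fun u hu ↦ ?_⟩
  · simp only [Walk.cons_isCycle_iff, Walk.cons_isPath_iff, Walk.isPath_iff_nil, Walk.edges_cons,
      Walk.support_cons, Walk.support_nil, Walk.edges_nil, List.mem_cons, List.not_mem_nil,
      Sym2.eq_iff, not_or, not_and, Walk.nil_nil]
    and_intros <;> grind
  · simp only [Walk.support_cons, Walk.support_nil, List.mem_cons, List.not_mem_nil, or_false]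
    grind

theorem disjointSquares_normalGraph (hg : 6 < G.egirth) (hind : G.IsIndepSet S)
    (hS : G.IsElementary S)
    (hcyc : ∀ v ∈ S, ∀ c₁ c₂ : G.Walk v v, c₁.IsCycle → c₂.IsCycle → c₁.length = 8 →
      c₂.length = 8 → ∀ e, e ∈ c₁.edges ↔ e ∈ c₂.edges) :
    (G.normalGraph S).DisjointSquares := by
  intro v x w y z w' t hvx hxw hwy hyv hxy hwv hvz hzw' hw't htv hzt hw'v
  obtain ⟨c₁, hc₁, hl₁, hs₁⟩ := exists_isCycle_length_eight hind hS hvx hxw hwy hyv hxy hwv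
  obtain ⟨c₂, hc₂, hl₂, hs₂⟩ := exists_isCycle_length_eight hind hS hvz hzw' hw't htv hzt hw'v
  have hsame : ∀ u ∈ S, (u = v ∨ u = x ∨ u = w ∨ u = y) ↔ (u = v ∨ u = z ∨ u = w' ∨ u = t) := by
    intro u hu
    rw [← hs₁ u hu, ← hs₂ u hu, Walk.mem_support_iff_exists_mem_edges,
      Walk.mem_support_iff_exists_mem_edges]
    simp only [hcyc v hvx.2.1 c₁ c₂ hc₁ hc₂ hl₁ hl₂]
  have hindep :=
    isIndepSet_neighborSet_of_triangleFree _ (cliqueFree_three_normalGraph hg hind hS) v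
  have hvw : ¬ (G.normalGraph S).Adj v w := fun h ↦ hindep hvx h hxw.ne hxw
  have hvw' : ¬ (G.normalGraph S).Adj v w' := fun h ↦ hindep hvz h hzw'.ne hzw'
  obtain rfl : w' = w := by
    rcases (hsame w' hzw'.2.2.1).2 (.inr (.inr (.inl rfl))) with h | h | h | h
    exacts [absurd h hw'v, absurd hvx (h ▸ hvw'), h, absurd hyv.symm (h ▸ hvw')]
  have hz : z = x ∨ z = y := by
    rcases (hsame z hvz.2.2.1).2 (.inr (.inl rfl)) with h | h | h | h
    exacts [absurd h hvz.ne', .inl h, absurd hvz (h ▸ hvw), .inr h]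
  have ht : t = x ∨ t = y := by
    rcases (hsame t htv.2.1).2 (.inr (.inr (.inr rfl))) with h | h | h | h
    exacts [absurd h htv.ne, .inl h, absurd htv.symm (h ▸ hvw), .inr h]
  refine ⟨rfl, ?_⟩
  rcases hz with rfl | rfl <;> rcases ht with rfl | rfl
  exacts [absurd rfl hzt, rfl, Sym2.eq_swap, absurd rfl hzt]

variable [Fintype V] [DecidableEq V] [DecidableRel G.Adj]

variable (G S) in
/-- For a variable node `v ∈ S`, its unsatisfied check nodes. -/
def privateNeighborFinset (v : V) : Finset V :=
  {r | {x ∈ S | G.Adj r x} = {v}}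

theorem card_filter_card_eq_one :
    #{r | #{x ∈ S | G.Adj r x} = 1} = ∑ v ∈ S, #(G.privateNeighborFinset S v) := by
  have : ({r | #{x ∈ S | G.Adj r x} = 1} : Finset V) = S.biUnion (G.privateNeighborFinset S) := by
    ext r
    simp only [mem_filter, mem_univ, true_and, card_eq_one, mem_biUnion, privateNeighborFinset]
    constructor
    · rintro ⟨v, hv⟩
      exact ⟨v, (mem_filter.1 (hv ▸ mem_singleton_self v)).1, hv⟩
    · rintro ⟨v, -, hv⟩
      exact ⟨v, hv⟩
  rw [this, card_biUnion fun v _ v' _ hne ↦ Finset.disjoint_left.2 fun r h h' ↦ ?_]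
  simp only [privateNeighborFinset, mem_filter, mem_univ, true_and] at h h'
  exact hne (singleton_inj.1 (h.symm.trans h'))

theorem card_neighborFinset_normalGraph [DecidableRel (G.normalGraph S).Adj]
    (hg : 4 < G.egirth) (hS : G.IsElementary S) (hv : v ∈ S) :
    #((G.normalGraph S).neighborFinset v) =
      #{r ∈ G.neighborFinset v | {x ∈ S | G.Adj r x} ≠ {v}} := by
  have hcommon {w} (hw : w ∈ (G.normalGraph S).neighborFinset v) : ∃ r, G.Adj v r ∧ G.Adj r w :=
    ((mem_neighborFinset _ _ _).1 hw).2.2.2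
  refine card_bij (fun w hw ↦ (hcommon hw).choose) (fun w hw ↦ ?_) (fun w₁ hw₁ w₂ hw₂ h ↦ ?_) ?_
  · obtain ⟨hvr, hrw⟩ := (hcommon hw).choose_spec
    obtain ⟨hvw, -, hw, -⟩ := (mem_neighborFinset _ _ _).1 hw
    refine mem_filter.2 ⟨(mem_neighborFinset _ _ _).2 hvr, fun h ↦ hvw ?_⟩
    have : w ∈ ({x ∈ S | G.Adj _ x} : Finset V) := mem_filter.2 ⟨hw, hrw⟩
    rw [h, mem_singleton] at this
    exact this.symm
  · obtain ⟨hvr₁, hrw₁⟩ := (hcommon hw₁).choose_spec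
    obtain ⟨hvr₂, hrw₂⟩ := (hcommon hw₂).choose_spec
    obtain ⟨hvw₁, hv, hw₁, -⟩ := (mem_neighborFinset _ _ _).1 hw₁
    obtain ⟨hvw₂, -, hw₂, -⟩ := (mem_neighborFinset _ _ _).1 hw₂
    rw [h] at hrw₁
    grind [hS hv hw₁ hw₂ hvr₂.symm hrw₁ hrw₂]
  · intro r hr
    obtain ⟨hvr, hne⟩ := mem_filter.1 hr
    rw [mem_neighborFinset] at hvr
    obtain ⟨w, hw, hwv⟩ : ∃ w ∈ ({x ∈ S | G.Adj r x} : Finset V), w ≠ v := by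
      by_contra! h
      exact hne (eq_singleton_iff_unique_mem.2 ⟨mem_filter.2 ⟨hv, hvr.symm⟩, h⟩)
    obtain ⟨hw, hrw⟩ := mem_filter.1 hw
    have hwN : w ∈ (G.normalGraph S).neighborFinset v :=
      (mem_neighborFinset _ _ _).2 ⟨hwv.symm, hv, hw, r, hvr, hrw⟩
    obtain ⟨hvr', hr'w⟩ := (hcommon hwN).choose_spec
    exact ⟨w, hwN, eq_of_adj_of_adj_of_four_lt_egirth hg hwv.symm hvr' hr'w hvr hrw⟩

theorem card_privateNeighborFinset_add_degree [DecidableRel (G.normalGraph S).Adj]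
    (hg : 4 < G.egirth) (hS : G.IsElementary S) (hv : v ∈ S) :
    #(G.privateNeighborFinset S v) + (G.normalGraph S).degree v = G.degree v := by
  rw [← card_neighborFinset_eq_degree, ← card_neighborFinset_eq_degree,
    card_neighborFinset_normalGraph hg hS hv, ← card_filter_add_card_filter_not
    (s := G.neighborFinset v) (fun r ↦ {x ∈ S | G.Adj r x} = {v})]
  congr 2
  ext r
  simp only [privateNeighborFinset, mem_filter, mem_univ, true_and, mem_neighborFinset,
    iff_and_self]
  intro h
  exact (mem_filter.1 (h ▸ mem_singleton_self v)).2.symm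

theorem degree_normalGraph_le [DecidableRel (G.normalGraph S).Adj] {d : ℕ} (hg : 4 < G.egirth)
    (hS : G.IsElementary S) (hreg : ∀ v ∈ S, G.degree v = d) (hv : v ∈ S) :
    (G.normalGraph S).degree v ≤ d :=
  hreg v hv ▸ card_privateNeighborFinset_add_degree hg hS hv ▸ Nat.le_add_left _ _

theorem sum_sub_degree_normalGraph [DecidableRel (G.normalGraph S).Adj] {d : ℕ}
    (hg : 4 < G.egirth) (hS : G.IsElementary S) (hreg : ∀ v ∈ S, G.degree v = d) :
    ∑ v ∈ S, (d - (G.normalGraph S).degree v) = #{r | #{x ∈ S | G.Adj r x} = 1} := by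
  rw [card_filter_card_eq_one]
  refine sum_congr rfl fun v hv ↦ ?_
  have := card_privateNeighborFinset_add_degree hg hS hv
  have := hreg v hv
  omega

end Tanner

end SimpleGraph

open SimpleGraph

theorem stmt13_general {V : Type*} [Fintype V] (G : SimpleGraph V) (L R : Set V)
    (hdisj : Disjoint L R)
    (hbip : ∀ ⦃u v : V⦄, G.Adj u v → (u ∈ L ∧ v ∈ R) ∨ (u ∈ R ∧ v ∈ L))
    (hgirth : G.girth = 8)
    (hreg : ∀ v ∈ L, Nat.card (G.neighborSet v) = 3)
    (hcyc : ∀ (u v : V) (c₁ : G.Walk u u) (c₂ : G.Walk v v),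
      c₁.IsCycle → c₂.IsCycle → c₁.length = 8 → c₂.length = 8 →
      {e : Sym2 V | e ∈ c₁.edges} ≠ {e : Sym2 V | e ∈ c₂.edges} →
      ∀ w ∈ L, w ∈ c₁.support → w ∉ c₂.support)
    (S : Set V) (hSL : S ⊆ L)
    (a : ℕ) (haS : Nat.card S = a)
    (hcheck : ∀ r ∈ R, Nat.card {v : V | v ∈ S ∧ G.Adj r v} ≤ 2)
    (b : ℕ) (hb : b = Nat.card {r : V | r ∈ R ∧ Odd (Nat.card {v : V | v ∈ S ∧ G.Adj r v})})
    (hba : b < a) :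
    (b = 0 → 10 ≤ a) ∧ (b = 1 → 11 ≤ a) ∧ (b = 2 → 10 ≤ a) ∧ (b = 3 → 7 ≤ a) := by
  classical
  lift S to Finset V using S.toFinite
  rw [Nat.card_coe_set_eq, Set.ncard_coe_finset] at haS
  subst haS
  have hg : G.egirth = 8 := (ENat.toNat_eq_iff (by norm_num)).1 hgirth
  have hR {x r} (hx : x ∈ S) (hxr : G.Adj x r) : r ∈ R := by
    rcases hbip hxr with h | h
    exacts [h.2, absurd h.1 (Set.disjoint_left.1 hdisj (hSL hx))]
  have hind : G.IsIndepSet S := fun x hx y hy _ hxy ↦ Set.disjoint_left.1 hdisj (hSL hy) (hR hx hxy)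
  have hnbrs r : Nat.card {v | v ∈ (S : Set V) ∧ G.Adj r v} = #{x ∈ S | G.Adj r x} := by
    rw [Nat.card_eq_card_toFinset]
    congr
    ext
    simp
  have hel := isElementary_of_card_filter_le_two fun r x hx hrx ↦
    hnbrs r ▸ hcheck r (hR hx hrx.symm)
  have hreg' v (hv : v ∈ S) : G.degree v = 3 := by
    rw [← card_neighborSet_eq_degree, ← Nat.card_eq_fintype_card, hreg v (hSL hv)]
  -- a check has at most two neighbours in `S`, so an odd number of them means exactly one
  have hodd : {r | r ∈ R ∧ Odd (Nat.card {v | v ∈ (S : Set V) ∧ G.Adj r v})} =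
      ({r | #{x ∈ S | G.Adj r x} = 1} : Finset V) := by
    ext r
    simp only [hnbrs, Set.mem_ofPred_eq, coe_filter, mem_univ, true_and]
    refine ⟨fun ⟨hr, k, hk⟩ ↦ by have := hnbrs r ▸ hcheck r hr; omega, fun h ↦ ?_⟩
    obtain ⟨x, hx⟩ := card_eq_one.1 h
    obtain ⟨hxS, hrx⟩ := mem_filter.1 (hx ▸ mem_singleton_self x)
    exact ⟨hR hxS hrx.symm, h ▸ odd_one⟩
  have h4 : 4 < G.egirth := by rw [hg]; norm_num
  have h6 : 6 < G.egirth := by rw [hg]; norm_num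
  refine card_lower_bounds (fun _ _ h ↦ (normalGraph_adj.1 h).2.1)
    (cliqueFree_three_normalGraph h6 hind hel)
    (disjointSquares_normalGraph h6 hind hel fun v hv c₁ c₂ h₁ h₂ l₁ l₂ ↦ ?_)
    (fun v hv ↦ degree_normalGraph_le h4 hel hreg' hv)
    (by rw [sum_sub_degree_normalGraph h4 hel hreg', hb, hodd, Nat.card_coe_set_eq,
      Set.ncard_coe_finset]) hba
  have : {e | e ∈ c₁.edges} = {e | e ∈ c₂.edges} := by
    by_contra hne
    exact hcyc v v c₁ c₂ h₁ h₂ l₁ l₂ hne v (hSL hv) c₁.start_mem_support c₂.start_mem_support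
  exact fun e ↦ Set.ext_iff.1 this e

/-- In a variable-regular Tanner graph of girth `8` with variable degree `3` in which no two
8-cycles with distinct edge sets share a variable node, the smallest sizes of `(a,b)`-ETSs
with `b < a` are `a = 10, 11, 10, 7` for `b = 0, 1, 2, 3` respectively. -/
theorem stmt13 {V : Type*} [Fintype V] (G : SimpleGraph V) (L R : Set V)
    (hdisj : Disjoint L R) (hcover : L ∪ R = Set.univ)
    (hbip : ∀ ⦃u v : V⦄, G.Adj u v → (u ∈ L ∧ v ∈ R) ∨ (u ∈ R ∧ v ∈ L))
    (hgirth : G.girth = 8)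
    (hreg : ∀ v ∈ L, Nat.card (G.neighborSet v) = 3)
    (hcyc : ∀ (u v : V) (c₁ : G.Walk u u) (c₂ : G.Walk v v),
      c₁.IsCycle → c₂.IsCycle → c₁.length = 8 → c₂.length = 8 →
      {e : Sym2 V | e ∈ c₁.edges} ≠ {e : Sym2 V | e ∈ c₂.edges} →
      ∀ w ∈ L, w ∈ c₁.support → w ∉ c₂.support)
    (S : Set V) (hSL : S ⊆ L) (hne : S.Nonempty)
    (a : ℕ) (haS : Nat.card S = a)
    (hcheck : ∀ r ∈ R, Nat.card {v : V | v ∈ S ∧ G.Adj r v} ≤ 2)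
    (b : ℕ) (hb : b = Nat.card {r : V | r ∈ R ∧ Odd (Nat.card {v : V | v ∈ S ∧ G.Adj r v})})
    (hba : b < a) :
    (b = 0 → 10 ≤ a) ∧ (b = 1 → 11 ≤ a) ∧ (b = 2 → 10 ≤ a) ∧ (b = 3 → 7 ≤ a) :=
  stmt13_general G L R hdisj hbip hgirth hreg hcyc S hSL a haS hcheck b hb hba
end
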